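/- arXiv:0905.1270 — 13 statements merged into one kernel-verified Lean document; each statement's English description precedes it below -/
import Mathlib

section
/- (Minty's theorem) Let A be a monotone operator with nonempty domain on a real Hilbert space H. Then A is maximal monotone if and only if for every λ > 0 the operator I + λA is surjective, i.e., for every z ∈ H there exists (x, x*) ∈ A with x + λx* = z. -/
/-!
For maximal monotone `A`, the function `Φ(x, u) = sup_{p ∈ A} (‖x + u‖² / 2 - ⟪p.2 - u, p.1 - x⟫)`
on the `L²` product `H × H` is `1`-strongly convex with closed sublevel sets, so it attains its
minimum at some `(x, u)` and grows at least like `‖· - (x, u)‖² / 2` away from it. Maximality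
gives `Φ ≥ ‖x + u‖² / 2` everywhere, monotonicity gives `Φ ≤ ‖x + u‖² / 2` on `A`, and the
quadratic growth at a point of `A` monotonically related to `(-u, -x)` gives
`Φ(x, u) ≤ -‖x + u‖² / 2`. Hence `x + u = 0` and `(x, u)` is monotonically related to `A`, so it
lies in `A`. A translation and a rescaling of `A` reduce `x + λx* = z` to this case. Conversely,
if `q` is monotonically related to `A` and `(x, x*) ∈ A` solves `x + x* = q.1 + q.2`, then
`0 ≤ ⟪x* - q.2, x - q.1⟫ = -‖x - q.1‖²`, so `q = (x, x*)`.
-/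

open RealInnerProductSpace

def MonotoneOp {H : Type*} [NormedAddCommGroup H] [InnerProductSpace ℝ H]
    (A : Set (H × H)) : Prop :=
  ∀ p ∈ A, ∀ q ∈ A, (0:ℝ) ≤ ⟪p.2 - q.2, p.1 - q.1⟫

open Set Filter Topology WithLp

namespace StrongConvexOn

variable {E : Type*} [NormedAddCommGroup E] [NormedSpace ℝ E] {s : Set E} {m : ℝ} {f : E → ℝ}

lemma norm_sub_sq_le (hf : StrongConvexOn s m f) {c : ℝ} (hc : ∀ z ∈ s, c ≤ f z)
    {x y : E} (hx : x ∈ s) (hy : y ∈ s) :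
    m / 4 * ‖x - y‖ ^ 2 ≤ (f x - c) + (f y - c) := by
  have half : (0 : ℝ) ≤ 1 / 2 := by norm_num
  have hmid := hf.2 hx hy half half (by norm_num)
  have hc_mid := hc _ (hf.1 hx hy half half (by norm_num))
  simp only [smul_eq_mul] at hmid
  linarith

theorem exists_isMinOn [CompleteSpace E] (hf : StrongConvexOn s m f) (hm : 0 < m)
    (hs : s.Nonempty) (hbdd : BddBelow (f '' s)) (hclosed : ∀ r, IsClosed {x ∈ s | f x ≤ r}) :
    ∃ x ∈ s, IsMinOn f s x := by
  set c := sInf (f '' s)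
  have hc : ∀ z ∈ s, c ≤ f z := fun z hz => csInf_le hbdd (mem_image_of_mem f hz)
  have hseq : ∀ n : ℕ, ∃ x ∈ s, f x < c + 1 / (n + 1) := fun n => by
    obtain ⟨_, ⟨x, hx, rfl⟩, hlt⟩ := Real.lt_sInf_add_pos (hs.image f) Nat.one_div_pos_of_nat
    exact ⟨x, hx, hlt⟩
  choose x hxs hxc using hseq
  have hx_le : ∀ N n : ℕ, N ≤ n → f (x n) ≤ c + 1 / (N + 1) := fun N n hn => by
    have : (1 : ℝ) / (n + 1) ≤ 1 / (N + 1) := by gcongr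
    linarith [hxc n]
  have hdist : ∀ n k N : ℕ, N ≤ n → N ≤ k → dist (x n) (x k) ≤ √(8 / m * (1 / (N + 1))) := by
    intro n k N hn hk
    rw [dist_eq_norm]
    apply Real.le_sqrt_of_sq_le
    have := hf.norm_sub_sq_le hc (hxs n) (hxs k)
    rw [div_mul_eq_mul_div, le_div_iff₀ hm]
    linarith [hx_le N n hn, hx_le N k hk]
  have hδ : Tendsto (fun N : ℕ => √(8 / m * (1 / (N + 1)))) atTop (𝓝 0) := by
    simpa using (tendsto_one_div_add_atTop_nhds_zero_nat.const_mul (8 / m)).sqrt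
  obtain ⟨x₀, hx₀⟩ := cauchySeq_tendsto_of_complete (cauchySeq_of_le_tendsto_0 _ hdist hδ)
  have hx₀_mem : ∀ N : ℕ, x₀ ∈ {x ∈ s | f x ≤ c + 1 / (N + 1)} := fun N =>
    (hclosed _).mem_of_tendsto hx₀ <| eventually_atTop.2 ⟨N, fun n hn => ⟨hxs n, hx_le N n hn⟩⟩
  have hx₀_le : f x₀ ≤ c :=
    ge_of_tendsto (by simpa using tendsto_one_div_add_atTop_nhds_zero_nat.const_add c)
      (Eventually.of_forall fun N => (hx₀_mem N).2)
  exact ⟨x₀, (hx₀_mem 0).1, fun z hz => hx₀_le.trans (hc z hz)⟩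

lemma add_norm_sub_sq_le_of_isMinOn (hf : StrongConvexOn s m f) {x y : E} (hx : x ∈ s)
    (hmin : IsMinOn f s x) (hy : y ∈ s) : f x + m / 2 * ‖y - x‖ ^ 2 ≤ f y := by
  have hseg : ∀ t ∈ Ioo (0 : ℝ) 1, f x + (1 - t) * (m / 2 * ‖y - x‖ ^ 2) ≤ f y := by
    rintro t ⟨ht0, ht1⟩
    have hconv := hf.2 hx hy (sub_nonneg.2 ht1.le) ht0.le (sub_add_cancel 1 t)
    have hle := isMinOn_iff.1 hmin _ (hf.1 hx hy (sub_nonneg.2 ht1.le) ht0.le (sub_add_cancel 1 t))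
    simp only [smul_eq_mul, norm_sub_rev x y] at hconv
    nlinarith
  have hlim : Tendsto (fun t : ℝ => f x + (1 - t) * (m / 2 * ‖y - x‖ ^ 2)) (𝓝[>] 0)
      (𝓝 (f x + m / 2 * ‖y - x‖ ^ 2)) := by
    have : Continuous fun t : ℝ => f x + (1 - t) * (m / 2 * ‖y - x‖ ^ 2) := by fun_prop
    simpa using (this.tendsto 0).mono_left nhdsWithin_le_nhds
  exact le_of_tendsto hlim (eventually_of_mem (Ioo_mem_nhdsGT one_pos) hseg)

end StrongConvexOn

section iSup

variable {E ι : Type*} [Nonempty ι] {f : ι → E → ℝ}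

lemma strongConvexOn_iSup [NormedAddCommGroup E] [NormedSpace ℝ E] {m : ℝ}
    (hf : ∀ i, StrongConvexOn univ m (f i)) :
    StrongConvexOn {x | BddAbove (range fun i => f i x)} m fun x => ⨆ i, f i x := by
  have key : ∀ ⦃x⦄, BddAbove (range fun i => f i x) → ∀ ⦃y⦄, BddAbove (range fun i => f i y) →
      ∀ ⦃a b : ℝ⦄, 0 ≤ a → 0 ≤ b → a + b = 1 → ∀ i,
      f i (a • x + b • y) ≤ a • (⨆ i, f i x) + b • (⨆ i, f i y) - a * b * (m / 2 * ‖x - y‖ ^ 2) :=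
    fun x hx y hy a b ha hb hab i => ((hf i).2 trivial trivial ha hb hab).trans <| by
      gcongr
      exacts [le_ciSup hx i, le_ciSup hy i]
  refine ⟨fun x hx y hy a b ha hb hab => ?_, fun x hx y hy a b ha hb hab => ?_⟩
  · exact ⟨_, forall_mem_range.2 (key hx hy ha hb hab)⟩
  · exact ciSup_le (key hx hy ha hb hab)

lemma isClosed_setOf_bddAbove_iSup_le [TopologicalSpace E]
    (hf : ∀ i, LowerSemicontinuous (f i)) (r : ℝ) :
    IsClosed {x ∈ {x | BddAbove (range fun i => f i x)} | ⨆ i, f i x ≤ r} := by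
  convert isClosed_iInter fun i => (hf i).isClosed_preimage r using 1
  ext x
  simp only [mem_ofPred_eq, mem_iInter, mem_preimage, mem_Iic]
  refine ⟨fun ⟨hx, hle⟩ i => (le_ciSup hx i).trans hle, fun h => ⟨⟨r, ?_⟩, ciSup_le h⟩⟩
  exact forall_mem_range.2 h

end iSup

section Minty

variable {H : Type*} [NormedAddCommGroup H] [InnerProductSpace ℝ H] {A : Set (H × H)}

def MonotonicallyRelated (A : Set (H × H)) (q : H × H) : Prop :=
  ∀ p ∈ A, (0 : ℝ) ≤ ⟪p.2 - q.2, p.1 - q.1⟫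

lemma MonotoneOp.insert (hA : MonotoneOp A) {q : H × H} (hq : MonotonicallyRelated A q) :
    MonotoneOp (insert q A) := by
  rintro p (rfl | hp) p' (rfl | hp')
  · simp
  · rw [← inner_neg_neg, neg_sub, neg_sub]
    exact hq p' hp'
  · exact hq p hp
  · exact hA p hp p' hp'

lemma MonotoneOp.maximal_iff (hA : MonotoneOp A) :
    (∀ B : Set (H × H), MonotoneOp B → A ⊆ B → B = A) ↔
      ∀ q, MonotonicallyRelated A q → q ∈ A := by
  refine ⟨fun hmax q hq => ?_, fun hmax B hB hAB => Subset.antisymm (fun q hq => hmax q ?_) hAB⟩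
  · rw [← hmax _ (hA.insert hq) (subset_insert q A)]
    exact mem_insert q A
  · exact fun p hp => hB p (hAB hp) q hq

lemma exists_inner_nonpos_of_maximal (hmax : ∀ q, MonotonicallyRelated A q → q ∈ A)
    (q : H × H) : ∃ p ∈ A, ⟪p.2 - q.2, p.1 - q.1⟫ ≤ (0 : ℝ) := by
  by_contra! h
  simpa using h q (hmax q fun p hp => (h p hp).le)

lemma MonotonicallyRelated.eq_of_add_eq {p q : H × H} (hq : MonotonicallyRelated A q) (hp : p ∈ A)
    (hpq : p.1 + p.2 = q.1 + q.2) : q = p := by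
  have h2 : p.2 - q.2 = -(p.1 - q.1) := by rw [neg_sub]; linear_combination (norm := abel) hpq
  have h1 : p.1 - q.1 = 0 := by
    have := hq p hp
    rw [h2, inner_neg_left, le_neg, neg_zero] at this
    exact inner_self_eq_zero.1 (le_antisymm this real_inner_self_nonneg)
  rw [sub_eq_zero] at h1
  ext
  · exact h1.symm
  · rw [h1] at hpq; exact (add_left_cancel hpq).symm

/-- `⨆ p ∈ A, fitzpatrickTerm p y` is the Fitzpatrick function of `A` at `y`, plus `‖y‖² / 2`. -/
noncomputable def fitzpatrickTerm (p : H × H) (y : WithLp 2 (H × H)) : ℝ :=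
  ‖y.fst + y.snd‖ ^ 2 / 2 - ⟪p.2 - y.snd, p.1 - y.fst⟫

lemma fitzpatrickTerm_eq (p : H × H) (y : WithLp 2 (H × H)) :
    fitzpatrickTerm p y = ⟪toLp 2 (p.2, p.1), y⟫ - ⟪p.2, p.1⟫ + ‖y‖ ^ 2 / 2 := by
  rw [fitzpatrickTerm, prod_norm_sq_eq_of_L2, prod_inner_apply, norm_add_sq_real]
  simp only [ofLp_fst, ofLp_snd, inner_sub_left, inner_sub_right, real_inner_comm y.fst y.snd,
    real_inner_comm p.1 y.snd]
  ring

lemma strongConvexOn_fitzpatrickTerm (p : H × H) : StrongConvexOn univ 1 (fitzpatrickTerm p) := by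
  have haffine : (fun y => fitzpatrickTerm p y - 1 / 2 * ‖y‖ ^ 2) =
      fun y => innerₛₗ ℝ (toLp 2 (p.2, p.1)) y + -⟪p.2, p.1⟫ := by
    funext y
    rw [fitzpatrickTerm_eq, innerₛₗ_apply_apply]
    ring
  rw [strongConvexOn_iff_convex, haffine]
  exact ((innerₛₗ ℝ _).convexOn convex_univ).add_const _

lemma continuous_fitzpatrickTerm (p : H × H) : Continuous (fitzpatrickTerm p) := by
  rw [funext (fitzpatrickTerm_eq p)]
  fun_prop

lemma fitzpatrickTerm_le_iff {p : H × H} {y : WithLp 2 (H × H)} :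
    fitzpatrickTerm p y ≤ ‖y.fst + y.snd‖ ^ 2 / 2 ↔ 0 ≤ ⟪p.2 - y.snd, p.1 - y.fst⟫ :=
  sub_le_self_iff _

lemma le_fitzpatrickTerm_iff {p : H × H} {y : WithLp 2 (H × H)} :
    ‖y.fst + y.snd‖ ^ 2 / 2 ≤ fitzpatrickTerm p y ↔ ⟪p.2 - y.snd, p.1 - y.fst⟫ ≤ 0 :=
  le_sub_self_iff _

lemma MonotoneOp.iSup_fitzpatrickTerm_le (hmono : MonotoneOp A) {q : H × H} (hq : q ∈ A) :
    BddAbove (range fun p : A => fitzpatrickTerm p (toLp 2 q)) ∧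
      ⨆ p : A, fitzpatrickTerm p (toLp 2 q) ≤ ‖q.1 + q.2‖ ^ 2 / 2 := by
  have hle : ∀ p : A, fitzpatrickTerm p (toLp 2 q) ≤ ‖q.1 + q.2‖ ^ 2 / 2 :=
    fun p => fitzpatrickTerm_le_iff.2 (hmono p p.2 q hq)
  have : Nonempty A := ⟨⟨q, hq⟩⟩
  exact ⟨⟨_, forall_mem_range.2 hle⟩, ciSup_le hle⟩

lemma le_iSup_fitzpatrickTerm (hmax : ∀ q, MonotonicallyRelated A q → q ∈ A)
    {y : WithLp 2 (H × H)} (hy : BddAbove (range fun p : A => fitzpatrickTerm p y)) :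
    ‖y.fst + y.snd‖ ^ 2 / 2 ≤ ⨆ p : A, fitzpatrickTerm p y := by
  obtain ⟨p, hp, hle⟩ := exists_inner_nonpos_of_maximal hmax (ofLp y)
  exact (le_fitzpatrickTerm_iff.2 hle).trans (le_ciSup hy ⟨p, hp⟩)

lemma mem_of_iSup_fitzpatrickTerm_le (hmax : ∀ q, MonotonicallyRelated A q → q ∈ A)
    {y : WithLp 2 (H × H)} (hy : BddAbove (range fun p : A => fitzpatrickTerm p y))
    (hle : ⨆ p : A, fitzpatrickTerm p y ≤ ‖y.fst + y.snd‖ ^ 2 / 2) : ofLp y ∈ A :=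
  hmax _ fun p hp => fitzpatrickTerm_le_iff.1 ((le_ciSup hy ⟨p, hp⟩).trans hle)

lemma norm_sub_sq_add_norm_sub_sq_sub_norm_add_sq (a b x u : H) :
    ‖a - x‖ ^ 2 + ‖b - u‖ ^ 2 - ‖a + b‖ ^ 2 = ‖x + u‖ ^ 2 - 2 * ⟪b + x, a + u⟫ := by
  simp only [norm_sub_sq_real, norm_add_sq_real, inner_add_left, inner_add_right,
    real_inner_comm a b, real_inner_comm a x, real_inner_comm u x]
  ring

theorem exists_mem_add_eq_zero [CompleteSpace H] (hA : A.Nonempty) (hmono : MonotoneOp A)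
    (hmax : ∀ q, MonotonicallyRelated A q → q ∈ A) : ∃ p ∈ A, p.1 + p.2 = 0 := by
  have : Nonempty A := hA.to_subtype
  set D := {y : WithLp 2 (H × H) | BddAbove (range fun p : A => fitzpatrickTerm p y)}
  set F := fun y : WithLp 2 (H × H) => ⨆ p : A, fitzpatrickTerm p y
  have hF : StrongConvexOn D 1 F := strongConvexOn_iSup fun p => strongConvexOn_fitzpatrickTerm p.1
  obtain ⟨q₀, hq₀⟩ := hA
  obtain ⟨y, hyD, hymin⟩ := hF.exists_isMinOn one_pos ⟨_, (hmono.iSup_fitzpatrickTerm_le hq₀).1⟩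
    ⟨0, by
      rintro _ ⟨y, hy, rfl⟩
      exact (by positivity : (0 : ℝ) ≤ _).trans (le_iSup_fitzpatrickTerm hmax hy)⟩
    (isClosed_setOf_bddAbove_iSup_le fun p => (continuous_fitzpatrickTerm p.1).lowerSemicontinuous)
  obtain ⟨p, hp, hp_le⟩ := exists_inner_nonpos_of_maximal hmax (-y.snd, -y.fst)
  have hgrowth := hF.add_norm_sub_sq_le_of_isMinOn hyD hymin (hmono.iSup_fitzpatrickTerm_le hp).1
  rw [prod_norm_sq_eq_of_L2] at hgrowth
  simp only [WithLp.sub_fst, WithLp.sub_snd, toLp_fst, toLp_snd, sub_neg_eq_add] at hgrowth hp_le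
  have hFy : F y ≤ -‖y.fst + y.snd‖ ^ 2 / 2 := by
    have := norm_sub_sq_add_norm_sub_sq_sub_norm_add_sq p.1 p.2 y.fst y.snd
    linarith [(hmono.iSup_fitzpatrickTerm_le hp).2]
  have hsum : y.fst + y.snd = 0 := by
    have : ‖y.fst + y.snd‖ ^ 2 = 0 :=
      le_antisymm (by linarith [le_iSup_fitzpatrickTerm hmax hyD]) (sq_nonneg _)
    exact norm_eq_zero.1 (pow_eq_zero_iff two_ne_zero |>.1 this)
  refine ⟨ofLp y, mem_of_iSup_fitzpatrickTerm_le hmax hyD (hFy.trans ?_), hsum⟩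
  rw [hsum, norm_zero]
  norm_num

theorem exists_mem_add_smul_eq [CompleteSpace H] (hA : A.Nonempty) (hmono : MonotoneOp A)
    (hmax : ∀ q, MonotonicallyRelated A q → q ∈ A) {c : ℝ} (hc : 0 < c) (z : H) :
    ∃ p ∈ A, p.1 + c • p.2 = z := by
  set T : H × H → H × H := fun p => (p.1 - z, c • p.2)
  have hT_inner : ∀ p q, ⟪(T p).2 - (T q).2, (T p).1 - (T q).1⟫ = c * ⟪p.2 - q.2, p.1 - q.1⟫ := by
    intro p q
    simp only [T, sub_sub_sub_cancel_right, ← smul_sub, real_inner_smul_left]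
  have hT_inv : ∀ q, T (q.1 + z, c⁻¹ • q.2) = q := fun q => by
    simp [T, smul_smul, hc.ne']
  obtain ⟨_, ⟨p, hp, rfl⟩, hp0⟩ := exists_mem_add_eq_zero (A := T '' A) (hA.image T)
    (by
      rintro _ ⟨p, hp, rfl⟩ _ ⟨q, hq, rfl⟩
      rw [hT_inner]
      exact mul_nonneg hc.le (hmono p hp q hq))
    (fun q hq => by
      rw [← hT_inv q]
      refine mem_image_of_mem T (hmax _ fun p hp => ?_)
      have := hq (T p) (mem_image_of_mem T hp)
      rw [← hT_inv q, hT_inner] at this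
      exact (mul_nonneg_iff_of_pos_left hc).1 this)
  refine ⟨p, hp, ?_⟩
  rw [← sub_eq_zero, ← hp0]
  simp only [T]
  abel

end Minty

/-- Minty's theorem: a monotone operator `A` with nonempty domain on a real
Hilbert space is maximal monotone iff `I + λA` is surjective for every `λ > 0`. -/
theorem stmt2 {H : Type*} [NormedAddCommGroup H] [InnerProductSpace ℝ H] [CompleteSpace H]
    (A : Set (H × H)) (hA : A.Nonempty) (hmono : MonotoneOp A) :
    (∀ B : Set (H × H), MonotoneOp B → A ⊆ B → B = A) ↔
      (∀ lam : ℝ, 0 < lam → ∀ z : H, ∃ p ∈ A, p.1 + lam • p.2 = z) := by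
  rw [hmono.maximal_iff]
  refine ⟨fun hmax lam hlam z => exists_mem_add_smul_eq hA hmono hmax hlam z, fun hsurj q hq => ?_⟩
  obtain ⟨p, hp, hpq⟩ := hsurj 1 one_pos (q.1 + q.2)
  rw [one_smul] at hpq
  rwa [hq.eq_of_add_eq hp hpq]
end

section
/- Let A be a monotone operator on a real Hilbert space H and let u₁, u₂ : [0, T] → H be locally Lipschitz functions such that for almost every t ∈ (0, T), both uᵢ are differentiable at t and −uᵢ′(t) ∈ A(uᵢ(t)) for i = 1, 2. Then the function t ↦ ‖u₁(t) − u₂(t)‖ is nonincreasing on [0, T]. -/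
open RealInnerProductSpace MeasureTheory Set

/-!
The squared distance `φ = ‖u₁ - u₂‖²` is absolutely continuous, being the square of a Lipschitz
function. Wherever both `uᵢ` satisfy the inclusion, `φ' = 2⟪u₁ - u₂, u₁' - u₂'⟫ ≤ 0` by
monotonicity of `A`, so the fundamental theorem of calculus for absolutely continuous functions
makes `φ`, and hence its square root, nonincreasing.
-/

theorem AbsolutelyContinuousOnInterval.antitoneOn_of_ae_deriv_nonpos {f : ℝ → ℝ} {a b : ℝ}
    (hf : AbsolutelyContinuousOnInterval f a b)
    (hf' : ∀ᵐ x ∂volume.restrict (Ioo a b), deriv f x ≤ 0) :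
    AntitoneOn f (Icc a b) := by
  intro s hs t ht hst
  have hsub : Icc s t ⊆ Icc a b := Icc_subset_Icc hs.1 ht.2
  have hderiv : ∀ᵐ x ∂volume.restrict (Icc s t), 0 ≤ -deriv f x := by
    rw [Measure.restrict_congr_set Ioo_ae_eq_Icc] at hf'
    filter_upwards [ae_restrict_of_ae_restrict_of_subset hsub hf'] with x hx using neg_nonneg.2 hx
  have hftc := (hf.mono (uIcc_of_le hst ▸ hsub.trans Icc_subset_uIcc)).integral_deriv_eq_sub
  have hint := intervalIntegral.integral_nonneg_of_ae_restrict hst hderiv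
  rw [intervalIntegral.integral_neg, hftc] at hint
  linarith

section MonotoneOp

variable {H : Type*} [NormedAddCommGroup H] [InnerProductSpace ℝ H] {A : Set (H × H)}

theorem MonotoneOp.inner_sub_nonpos_of_neg_mem (hA : MonotoneOp A) {x y d₁ d₂ : H}
    (h₁ : (x, -d₁) ∈ A) (h₂ : (y, -d₂) ∈ A) : ⟪x - y, d₁ - d₂⟫ ≤ 0 := by
  have := hA _ h₁ _ h₂
  rw [show -d₁ - -d₂ = -(d₁ - d₂) by abel, inner_neg_left, real_inner_comm] at this
  linarith

theorem MonotoneOp.deriv_norm_sub_sq_nonpos (hA : MonotoneOp A) {u₁ u₂ : ℝ → H} {d₁ d₂ : H}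
    {t : ℝ} (hu₁ : HasDerivAt u₁ d₁ t) (hu₂ : HasDerivAt u₂ d₂ t)
    (h₁ : (u₁ t, -d₁) ∈ A) (h₂ : (u₂ t, -d₂) ∈ A) :
    deriv (fun τ => ‖u₁ τ - u₂ τ‖ ^ 2) t ≤ 0 := by
  rw [(hu₁.fun_sub hu₂).norm_sq.deriv]
  nlinarith [hA.inner_sub_nonpos_of_neg_mem h₁ h₂]

end MonotoneOp

theorem stmt4_general {H : Type*} [NormedAddCommGroup H] [InnerProductSpace ℝ H]
    (A : Set (H × H)) (hmono : MonotoneOp A)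
    (T : ℝ) (hT : 0 < T) (u₁ u₂ : ℝ → H)
    (h₁lip : LocallyLipschitzOn (Icc 0 T) u₁)
    (h₂lip : LocallyLipschitzOn (Icc 0 T) u₂)
    (hae : ∀ᵐ t ∂(volume.restrict (Ioo 0 T)),
      ∃ d₁ d₂ : H, HasDerivAt u₁ d₁ t ∧ HasDerivAt u₂ d₂ t ∧
        (u₁ t, -d₁) ∈ A ∧ (u₂ t, -d₂) ∈ A) :
    AntitoneOn (fun t => ‖u₁ t - u₂ t‖) (Icc 0 T) := by
  obtain ⟨K, hK⟩ := (h₁lip.sub h₂lip).exists_lipschitzOnWith_of_compact isCompact_Icc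
  have hdist : AbsolutelyContinuousOnInterval (fun t => ‖u₁ t - u₂ t‖) 0 T :=
    (uIcc_of_le hT.le ▸
      lipschitzWith_one_norm.comp_lipschitzOnWith hK).absolutelyContinuousOnInterval
  have hsq : AntitoneOn (fun t => ‖u₁ t - u₂ t‖ ^ 2) (Icc 0 T) := by
    refine AbsolutelyContinuousOnInterval.antitoneOn_of_ae_deriv_nonpos ?_ ?_
    · simpa only [sq] using hdist.fun_mul hdist
    · filter_upwards [hae] with t ⟨d₁, d₂, hd₁, hd₂, h₁, h₂⟩
      exact hmono.deriv_norm_sub_sq_nonpos hd₁ hd₂ h₁ h₂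
  intro s hs t ht hst
  exact (pow_le_pow_iff_left₀ (norm_nonneg _) (norm_nonneg _) two_ne_zero).1 (hsq hs ht hst)

/-- for two locally Lipschitz solutions of `u̇ ∈ −Au` on `[0, T]` with `A`
monotone, the distance `t ↦ ‖u₁(t) − u₂(t)‖` is nonincreasing on `[0, T]`. -/
theorem stmt4 {H : Type*} [NormedAddCommGroup H] [InnerProductSpace ℝ H] [CompleteSpace H]
    (A : Set (H × H)) (hA : A.Nonempty) (hmono : MonotoneOp A)
    (T : ℝ) (hT : 0 < T) (u₁ u₂ : ℝ → H)
    (h₁lip : LocallyLipschitzOn (Icc 0 T) u₁)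
    (h₂lip : LocallyLipschitzOn (Icc 0 T) u₂)
    (hae : ∀ᵐ t ∂(volume.restrict (Ioo 0 T)),
      ∃ d₁ d₂ : H, HasDerivAt u₁ d₁ t ∧ HasDerivAt u₂ d₂ t ∧
        (u₁ t, -d₁) ∈ A ∧ (u₂ t, -d₂) ∈ A) :
    AntitoneOn (fun t => ‖u₁ t - u₂ t‖) (Icc 0 T) :=
  stmt4_general A hmono T hT u₁ u₂ h₁lip h₂lip hae
end

section
/- Let A be a monotone operator on a real Hilbert space H. If (u₁, v₁), (u₂, v₂) ∈ A and λ, μ > 0, then (λ + μ)‖u₁ − u₂‖ ≤ λ‖u₂ + μv₂ − u₁‖ + μ‖u₁ + λv₁ − u₂‖. -/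
/-! With `a = u₂ + μv₂ − u₁`, `b = u₁ + λv₁ − u₂` and `d = u₁ − u₂` one has
`μb − λa = (λ + μ)d + λμ(v₁ − v₂)`, so monotonicity gives `(λ + μ)‖d‖² ≤ ⟪μb − λa, d⟫`.
Cauchy–Schwarz turns this into `(λ + μ)‖d‖ ≤ ‖μb − λa‖ ≤ μ‖b‖ + λ‖a‖`. -/

open RealInnerProductSpace

theorem mul_norm_le_norm_of_mul_norm_sq_le_inner {E : Type*} [NormedAddCommGroup E]
    [InnerProductSpace ℝ E] {c : ℝ} {w x : E} (h : c * ‖x‖ ^ 2 ≤ ⟪w, x⟫) :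
    c * ‖x‖ ≤ ‖w‖ := by
  rcases (norm_nonneg x).eq_or_lt with hx | hx
  · rw [← hx, mul_zero]
    exact norm_nonneg w
  · refine le_of_mul_le_mul_right ?_ hx
    calc c * ‖x‖ * ‖x‖ = c * ‖x‖ ^ 2 := by ring
      _ ≤ ⟪w, x⟫ := h
      _ ≤ ‖w‖ * ‖x‖ := real_inner_le_norm w x

theorem stmt6_general {H : Type*} [NormedAddCommGroup H] [InnerProductSpace ℝ H]
    (A : Set (H × H)) (hmono : MonotoneOp A)
    (u₁ v₁ u₂ v₂ : H) (h₁ : (u₁, v₁) ∈ A) (h₂ : (u₂, v₂) ∈ A)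
    (lam mu : ℝ) (hlam : 0 < lam) (hmu : 0 < mu) :
    (lam + mu) * ‖u₁ - u₂‖ ≤
      lam * ‖u₂ + mu • v₂ - u₁‖ + mu * ‖u₁ + lam • v₁ - u₂‖ := by
  have hcomb : mu • (u₁ + lam • v₁ - u₂) - lam • (u₂ + mu • v₂ - u₁) =
      (lam + mu) • (u₁ - u₂) + (lam * mu) • (v₁ - v₂) := by
    module
  have hinner : (lam + mu) * ‖u₁ - u₂‖ ^ 2 ≤
      ⟪mu • (u₁ + lam • v₁ - u₂) - lam • (u₂ + mu • v₂ - u₁), u₁ - u₂⟫ := by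
    rw [hcomb, inner_add_left, real_inner_smul_left, real_inner_smul_left,
      real_inner_self_eq_norm_sq, le_add_iff_nonneg_right]
    exact mul_nonneg (mul_pos hlam hmu).le (hmono _ h₁ _ h₂)
  calc (lam + mu) * ‖u₁ - u₂‖
      ≤ ‖mu • (u₁ + lam • v₁ - u₂) - lam • (u₂ + mu • v₂ - u₁)‖ :=
        mul_norm_le_norm_of_mul_norm_sq_le_inner hinner
    _ ≤ ‖mu • (u₁ + lam • v₁ - u₂)‖ + ‖lam • (u₂ + mu • v₂ - u₁)‖ := norm_sub_le _ _
    _ = lam * ‖u₂ + mu • v₂ - u₁‖ + mu * ‖u₁ + lam • v₁ - u₂‖ := by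
      rw [norm_smul_of_nonneg hmu.le, norm_smul_of_nonneg hlam.le, add_comm]

/-- if `(u₁, v₁), (u₂, v₂) ∈ A` with `A` monotone and `λ, μ > 0`, then
`(λ + μ)‖u₁ − u₂‖ ≤ λ‖u₂ + μv₂ − u₁‖ + μ‖u₁ + λv₁ − u₂‖`. -/
theorem stmt6 {H : Type*} [NormedAddCommGroup H] [InnerProductSpace ℝ H] [CompleteSpace H]
    (A : Set (H × H)) (hmono : MonotoneOp A)
    (u₁ v₁ u₂ v₂ : H) (h₁ : (u₁, v₁) ∈ A) (h₂ : (u₂, v₂) ∈ A)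
    (lam mu : ℝ) (hlam : 0 < lam) (hmu : 0 < mu) :
    (lam + mu) * ‖u₁ - u₂‖ ≤
      lam * ‖u₂ + mu • v₂ - u₁‖ + mu * ‖u₁ + lam • v₁ - u₂‖ :=
  stmt6_general A hmono u₁ v₁ u₂ v₂ h₁ h₂ lam mu hlam hmu
end

section
/- (Kobayashi inequality) Let A be a monotone operator on a real Hilbert space H. Let (x_k)_{k≥0} be a proximal sequence for A with stepsizes λ_k > 0, and (x̂_l)_{l≥0} a proximal sequence for A with stepsizes λ̂_l > 0. Set σ_k = λ_1 + ⋯ + λ_k, τ_k = λ_1² + ⋯ + λ_k² (with σ_0 = τ_0 = 0), and similarly σ̂_l, τ̂_l. Then for every u ∈ H, every w with (u, w) ∈ A, and all k, l ≥ 0: ‖x_k − x̂_l‖ ≤ ‖x_0 − u‖ + ‖x̂_0 − u‖ + ‖w‖ · √((σ_k − σ̂_l)² + τ_k + τ̂_l). -/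
/-!
Write `d k l = ‖x k - xh l‖`. Monotonicity of `A` tested on `(x (k+1), xh (l+1))` gives Kobayashi's
recursion `(λ + λ̂) d (k+1) (l+1) ≤ λ̂ d k (l+1) + λ d (k+1) l`, and tested against `(u, w)` it gives
`‖x k - u‖ ≤ ‖x 0 - u‖ + σ k ‖w‖`, which bounds `d` on the edges `k = 0` and `l = 0`. The
right-hand side of the inequality satisfies the reverse recursion: its radicand at `(k+1, l+1)` is
the `(λ̂, λ)`-weighted mean of the radicands at `(k, l+1)` and `(k+1, l)`, and `√` is concave.
A discrete comparison principle on `ℕ × ℕ` concludes.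
-/

open RealInnerProductSpace Finset

theorem sqrt_kobayashi_supersolution {l m s t sh th : ℝ} (hl : 0 < l) (hm : 0 < m)
    (ht : 0 ≤ t) (hth : 0 ≤ th) :
    m * √((s - (sh + m)) ^ 2 + t + (th + m ^ 2)) + l * √((s + l - sh) ^ 2 + (t + l ^ 2) + th) ≤
      (l + m) * √((s + l - (sh + m)) ^ 2 + (t + l ^ 2) + (th + m ^ 2)) := by
  have hlm : 0 < l + m := by positivity
  have hmean : m / (l + m) * ((s - (sh + m)) ^ 2 + t + (th + m ^ 2)) +
      l / (l + m) * ((s + l - sh) ^ 2 + (t + l ^ 2) + th) =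
      (s + l - (sh + m)) ^ 2 + (t + l ^ 2) + (th + m ^ 2) := by
    field_simp
    ring
  have hconc := Real.strictConcaveOn_sqrt.concaveOn.2
    (Set.mem_Ici.2 (by positivity : 0 ≤ (s - (sh + m)) ^ 2 + t + (th + m ^ 2)))
    (Set.mem_Ici.2 (by positivity : 0 ≤ (s + l - sh) ^ 2 + (t + l ^ 2) + th))
    (div_nonneg hm.le hlm.le) (div_nonneg hl.le hlm.le) (by field_simp; ring)
  rw [smul_eq_mul, smul_eq_mul, smul_eq_mul, smul_eq_mul, hmean] at hconc
  calc _ = (l + m) * (m / (l + m) * √((s - (sh + m)) ^ 2 + t + (th + m ^ 2)) +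
        l / (l + m) * √((s + l - sh) ^ 2 + (t + l ^ 2) + th)) := by field_simp
    _ ≤ _ := mul_le_mul_of_nonneg_left hconc hlm.le

theorem add_le_sqrt_sub_sq_add_add {a b t t' : ℝ} (hab : a * b = 0) (ht : 0 ≤ t) (ht' : 0 ≤ t') :
    a + b ≤ √((a - b) ^ 2 + t + t') :=
  Real.le_sqrt_of_sq_le (by nlinarith)

theorem le_of_discrete_supersolution {p q : ℕ → ℝ} {d φ : ℕ → ℕ → ℝ}
    (hp : ∀ k, 0 < p k) (hq : ∀ l, 0 < q l)
    (hd : ∀ k l, (p k + q l) * d (k + 1) (l + 1) ≤ q l * d k (l + 1) + p k * d (k + 1) l)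
    (hφ : ∀ k l, q l * φ k (l + 1) + p k * φ (k + 1) l ≤ (p k + q l) * φ (k + 1) (l + 1))
    (hleft : ∀ l, d 0 l ≤ φ 0 l) (hbot : ∀ k, d k 0 ≤ φ k 0) :
    ∀ k l, d k l ≤ φ k l := by
  intro k
  induction k with
  | zero => exact hleft
  | succ k ihk =>
    intro l
    induction l with
    | zero => exact hbot _
    | succ l ihl =>
      refine le_of_mul_le_mul_left ?_ (add_pos (hp k) (hq l))
      calc _ ≤ q l * d k (l + 1) + p k * d (k + 1) l := hd k l
        _ ≤ q l * φ k (l + 1) + p k * φ (k + 1) l := by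
          gcongr
          · exact (hq l).le
          · exact ihk _
          · exact (hp k).le
        _ ≤ _ := hφ k l

section Monotone

variable {H : Type*} [NormedAddCommGroup H] [InnerProductSpace ℝ H] {A : Set (H × H)}

def IsProximalSeq (A : Set (H × H)) (lam : ℕ → ℝ) (x : ℕ → H) : Prop :=
  ∀ k, (x (k + 1), (lam (k + 1))⁻¹ • (x k - x (k + 1))) ∈ A

theorem mul_le_of_mul_sq_le_mul {r n N : ℝ} (hn : 0 ≤ n) (hN : 0 ≤ N)
    (h : r * n ^ 2 ≤ N * n) : r * n ≤ N := by
  rcases hn.eq_or_lt with rfl | hn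
  · simpa using hN
  · nlinarith

theorem MonotoneOp.add_mul_norm_sub_le (hA : MonotoneOp A) {a b c e : H} {l m : ℝ}
    (hl : 0 < l) (hm : 0 < m) (hb : (b, l⁻¹ • (a - b)) ∈ A) (he : (e, m⁻¹ • (c - e)) ∈ A) :
    (l + m) * ‖b - e‖ ≤ m * ‖a - e‖ + l * ‖b - c‖ := by
  set v := m • (a - e) + l • (b - c)
  have hscale : (l * m) • (l⁻¹ • (a - b) - m⁻¹ • (c - e)) = v - (l + m) • (b - e) := by
    rw [smul_sub, smul_smul, smul_smul, show l * m * l⁻¹ = m by field_simp,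
      show l * m * m⁻¹ = l by field_simp]
    module
  have hinner : 0 ≤ ⟪v - (l + m) • (b - e), b - e⟫ := by
    rw [← hscale, real_inner_smul_left]
    exact mul_nonneg (by positivity) (hA _ hb _ he)
  rw [inner_sub_left, real_inner_smul_left, real_inner_self_eq_norm_sq] at hinner
  refine mul_le_of_mul_sq_le_mul (norm_nonneg _) (by positivity) ?_
  calc (l + m) * ‖b - e‖ ^ 2 ≤ ⟪v, b - e⟫ := by linarith
    _ ≤ ‖v‖ * ‖b - e‖ := real_inner_le_norm _ _
    _ ≤ (m * ‖a - e‖ + l * ‖b - c‖) * ‖b - e‖ := by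
      gcongr
      refine (norm_add_le _ _).trans ?_
      rw [norm_smul, norm_smul, Real.norm_of_nonneg hm.le, Real.norm_of_nonneg hl.le]

theorem MonotoneOp.norm_sub_le_add_mul (hA : MonotoneOp A) {a b u w : H} {l : ℝ} (hl : 0 < l)
    (hb : (b, l⁻¹ • (a - b)) ∈ A) (huw : (u, w) ∈ A) : ‖b - u‖ ≤ ‖a - u‖ + l * ‖w‖ := by
  -- `(u, w)` is the resolvent step from `u + w` with stepsize `1`
  have hu : (u, (1 : ℝ)⁻¹ • (u + w - u)) ∈ A := by simpa using huw
  have h := hA.add_mul_norm_sub_le hl one_pos hb hu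
  have htri : ‖b - (u + w)‖ ≤ ‖b - u‖ + ‖w‖ := by
    simpa [sub_add_eq_sub_sub] using norm_sub_le (b - u) w
  nlinarith

theorem IsProximalSeq.norm_sub_le (hA : MonotoneOp A) {lam : ℕ → ℝ} {x : ℕ → H}
    (hx : IsProximalSeq A lam x) (hlam : ∀ k, 0 < lam (k + 1)) {u w : H} (huw : (u, w) ∈ A)
    (k : ℕ) : ‖x k - u‖ ≤ ‖x 0 - u‖ + (∑ i ∈ range k, lam (i + 1)) * ‖w‖ := by
  induction k with
  | zero => simp
  | succ k ih =>
    rw [sum_range_succ, add_mul, ← add_assoc]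
    exact (hA.norm_sub_le_add_mul (hlam k) (hx k) huw).trans (by linarith)

end Monotone

theorem stmt7_general {H : Type*} [NormedAddCommGroup H] [InnerProductSpace ℝ H]
    (A : Set (H × H)) (hmono : MonotoneOp A)
    (lam lamh : ℕ → ℝ)
    (hlam : ∀ k : ℕ, 0 < lam (k + 1)) (hlamh : ∀ l : ℕ, 0 < lamh (l + 1))
    (x xh : ℕ → H)
    (hx : ∀ k : ℕ, (x (k + 1), (lam (k + 1))⁻¹ • (x k - x (k + 1))) ∈ A)
    (hxh : ∀ l : ℕ, (xh (l + 1), (lamh (l + 1))⁻¹ • (xh l - xh (l + 1))) ∈ A)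
    (u w : H) (huw : (u, w) ∈ A) :
    ∀ k l : ℕ,
      ‖x k - xh l‖ ≤ ‖x 0 - u‖ + ‖xh 0 - u‖ +
        ‖w‖ * Real.sqrt
          ((∑ i ∈ range k, lam (i + 1) - ∑ j ∈ range l, lamh (j + 1)) ^ 2 +
            ∑ i ∈ range k, lam (i + 1) ^ 2 + ∑ j ∈ range l, lamh (j + 1) ^ 2) := by
  have hτ : ∀ (f : ℕ → ℝ) n, 0 ≤ ∑ i ∈ range n, f (i + 1) ^ 2 :=
    fun f n => sum_nonneg fun i _ => sq_nonneg _
  have hnorm_le_sum : ∀ k l, ‖x k - xh l‖ ≤ ‖x 0 - u‖ + ‖xh 0 - u‖ +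
      ‖w‖ * (∑ i ∈ range k, lam (i + 1) + ∑ j ∈ range l, lamh (j + 1)) := fun k l => by
    have := norm_sub_le_norm_sub_add_norm_sub (x k) u (xh l)
    rw [norm_sub_rev u] at this
    linarith [IsProximalSeq.norm_sub_le hmono hx hlam huw k,
      IsProximalSeq.norm_sub_le hmono hxh hlamh huw l]
  refine le_of_discrete_supersolution (p := fun k => lam (k + 1)) (q := fun l => lamh (l + 1))
    (d := fun k l => ‖x k - xh l‖) hlam hlamh
    (fun k l => hmono.add_mul_norm_sub_le (hlam k) (hlamh l) (hx k) (hxh l)) (fun k l => ?_)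
    (fun l => (hnorm_le_sum 0 l).trans ?_) (fun k => (hnorm_le_sum k 0).trans ?_)
  · have := sqrt_kobayashi_supersolution (s := ∑ i ∈ range k, lam (i + 1))
      (sh := ∑ j ∈ range l, lamh (j + 1)) (hlam k) (hlamh l) (hτ lam k) (hτ lamh l)
    simp only [sum_range_succ]
    linarith [mul_le_mul_of_nonneg_left this (norm_nonneg w)]
  all_goals
    gcongr
    exact add_le_sqrt_sub_sq_add_add (by simp) (hτ lam _) (hτ lamh _)

/-- Kobayashi inequality: for two proximal sequences `(x_k)`, `(x̂_l)` of a
monotone operator `A` with stepsizes `(λ_k)`, `(λ̂_l)`, and any `(u, w) ∈ A`,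
`‖x_k − x̂_l‖ ≤ ‖x_0 − u‖ + ‖x̂_0 − u‖ + ‖w‖√((σ_k − σ̂_l)² + τ_k + τ̂_l)`. -/
theorem stmt7 {H : Type*} [NormedAddCommGroup H] [InnerProductSpace ℝ H] [CompleteSpace H]
    (A : Set (H × H)) (hmono : MonotoneOp A)
    (lam lamh : ℕ → ℝ)
    (hlam : ∀ k : ℕ, 0 < lam (k + 1)) (hlamh : ∀ l : ℕ, 0 < lamh (l + 1))
    (x xh : ℕ → H)
    (hx : ∀ k : ℕ, (x (k + 1), (lam (k + 1))⁻¹ • (x k - x (k + 1))) ∈ A)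
    (hxh : ∀ l : ℕ, (xh (l + 1), (lamh (l + 1))⁻¹ • (xh l - xh (l + 1))) ∈ A)
    (u w : H) (huw : (u, w) ∈ A) :
    ∀ k l : ℕ,
      ‖x k - xh l‖ ≤ ‖x 0 - u‖ + ‖xh 0 - u‖ +
        ‖w‖ * Real.sqrt
          ((∑ i ∈ range k, lam (i + 1) - ∑ j ∈ range l, lamh (j + 1)) ^ 2 +
            ∑ i ∈ range k, lam (i + 1) ^ 2 + ∑ j ∈ range l, lamh (j + 1) ^ 2) :=
  stmt7_general A hmono lam lamh hlam hlamh x xh hx hxh u w huw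
end

section
/- (Chernoff's estimate) Let H be a real Hilbert space, T : H → H nonexpansive (‖Tx − Ty‖ ≤ ‖x − y‖ for all x, y), λ > 0, and let v : [0, ∞) → H be differentiable with v′(t) = −(1/λ)(v(t) − T(v(t))) for all t ≥ 0 and v(0) = v₀. Then for every n ∈ ℕ and t ≥ 0: ‖v(t) − T^[n](v₀)‖ ≤ (1/λ)‖v₀ − T(v₀)‖ · √(λt + (nλ − t)²), where T^[n] denotes the n-th iterate of T. -/
/-!
Let `C = ‖v₀ - T v₀‖ / λ`, `φₙ(t) = ‖v(t) - Tⁿ v₀‖²` and `βₙ(t) = C² (λt + (nλ - t)²)`.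
Along the flow, nonexpansiveness of `T` gives `λ φₙ₊₁' + φₙ₊₁ ≤ φₙ`, while the `βₙ`
satisfy `λ βₙ₊₁' + βₙ₊₁ = βₙ` exactly. With the integrating factor `e^{t/λ}` this yields
`φₙ ≤ βₙ` by induction on `n`, starting from `φₙ(0) ≤ (nλC)²`. For `n = 0` the flow only
gives `φ₀' ≤ 2C √φ₀`, hence `φ₀(t) ≤ (Ct)² ≤ β₀(t)`.
-/

open Set Filter Topology
open scoped RealInnerProductSpace

theorem le_of_mul_deriv_add_le {f g f' g' : ℝ → ℝ} {c a b : ℝ} (hc : 0 < c)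
    (hab : a ≤ b) (hf : ∀ x ∈ Icc a b, HasDerivAt f (f' x) x)
    (hg : ∀ x ∈ Icc a b, HasDerivAt g (g' x) x)
    (hfg : ∀ x ∈ Icc a b, c * f' x + f x ≤ c * g' x + g x) (ha : f a ≤ g a) :
    f b ≤ g b := by
  set h : ℝ → ℝ := fun x => Real.exp (x / c) * (f x - g x)
  have hh : ∀ x ∈ Icc a b,
      HasDerivAt h (Real.exp (x / c) / c * (c * f' x + f x - (c * g' x + g x))) x := by
    intro x hx
    refine (((hasDerivAt_id' x).div_const c).exp.mul
      ((hf x hx).sub (hg x hx))).congr_deriv ?_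
    simp only [Pi.sub_apply]
    field_simp
    ring
  have hhb := image_le_of_deriv_right_le_deriv_boundary (f := h) (B := fun _ => 0)
    (B' := fun _ => 0) (fun x hx => (hh x hx).continuousAt.continuousWithinAt)
    (fun x hx => (hh x (Ico_subset_Icc_self hx)).hasDerivWithinAt)
    (mul_nonpos_of_nonneg_of_nonpos (Real.exp_pos _).le (sub_nonpos.2 ha))
    continuousOn_const (fun x _ => hasDerivWithinAt_const _ _ _)
    (fun x hx => mul_nonpos_of_nonneg_of_nonpos (by positivity)
      (sub_nonpos.2 (hfg x (Ico_subset_Icc_self hx))))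
    (right_mem_Icc.2 hab)
  exact sub_nonpos.1 (nonpos_of_mul_nonpos_right hhb (Real.exp_pos _))

theorem le_sq_of_deriv_le_two_mul_sqrt {f f' : ℝ → ℝ} {C a b : ℝ} (hC : 0 ≤ C)
    (hab : a ≤ b) (hf : ∀ x ∈ Icc a b, HasDerivAt f (f' x) x)
    (hf' : ∀ x ∈ Icc a b, f' x ≤ 2 * C * √(f x)) (ha : f a ≤ 0) :
    f b ≤ (C * (b - a)) ^ 2 := by
  -- `B' = 2C√B` has non-unique solutions from `B(a) = 0`, so we fence `f` by the strict
  -- supersolutions `((C + ε)(x - a) + ε)²` and let `ε → 0`.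
  have hfence : ∀ ε > 0, f b ≤ ((C + ε) * (b - a) + ε) ^ 2 := by
    intro ε hε
    refine image_le_of_deriv_right_lt_deriv_boundary (f' := f')
      (B := fun x => ((C + ε) * (x - a) + ε) ^ 2)
      (B' := fun x => 2 * (C + ε) * ((C + ε) * (x - a) + ε))
      (fun x hx => (hf x hx).continuousAt.continuousWithinAt)
      (fun x hx => (hf x (Ico_subset_Icc_self hx)).hasDerivWithinAt)
      (by nlinarith) (fun x => ?_) (fun x hx hfx => ?_) (right_mem_Icc.2 hab)
    · refine ((((hasDerivAt_id' x).sub_const a).const_mul (C + ε)).add_const ε).pow 2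
        |>.congr_deriv ?_
      ring
    · have hpos : 0 < (C + ε) * (x - a) + ε := by nlinarith [hx.1]
      calc f' x ≤ 2 * C * √(f x) := hf' x (Ico_subset_Icc_self hx)
        _ = 2 * C * ((C + ε) * (x - a) + ε) := by rw [hfx, Real.sqrt_sq hpos.le]
        _ < 2 * (C + ε) * ((C + ε) * (x - a) + ε) := by nlinarith
  have hlim : Tendsto (fun ε => ((C + ε) * (b - a) + ε) ^ 2) (𝓝[>] 0)
      (𝓝 ((C * (b - a)) ^ 2)) := by
    have hcont : Continuous fun ε : ℝ => ((C + ε) * (b - a) + ε) ^ 2 := by fun_prop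
    simpa using (hcont.tendsto 0).mono_left nhdsWithin_le_nhds
  exact ge_of_tendsto hlim (eventually_nhdsWithin_of_forall hfence)

theorem dist_iterate_le_mul_dist {α : Type*} [PseudoMetricSpace α] {f : α → α}
    (hf : LipschitzWith 1 f) (x : α) (n : ℕ) : dist x (f^[n] x) ≤ n * dist x (f x) :=
  calc dist x (f^[n] x) ≤ ∑ i ∈ Finset.range n, dist (f^[i] x) (f^[i + 1] x) :=
        dist_le_range_sum_dist (fun i => f^[i] x) n
    _ ≤ ∑ _i ∈ Finset.range n, dist x (f x) :=
        Finset.sum_le_sum fun i _ => by simpa using hf.dist_iterate_succ_le_geometric x i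
    _ = n * dist x (f x) := by simp

section Hilbert

variable {H : Type*} [NormedAddCommGroup H] [InnerProductSpace ℝ H] {T : H → H}

theorem norm_sub_sq_sub_two_inner_le (hT : LipschitzWith 1 T) (u c : H) :
    ‖u - T c‖ ^ 2 - 2 * ⟪u - T u, u - T c⟫ ≤ ‖u - c‖ ^ 2 := by
  have hexpand := norm_sub_sq_real (u - T c) (u - T u)
  rw [show u - T c - (u - T u) = T u - T c by abel, real_inner_comm] at hexpand
  have hTuc : ‖T u - T c‖ ≤ ‖u - c‖ := by simpa using hT.norm_sub_le u c
  nlinarith [sq_nonneg ‖u - T u‖, norm_nonneg (T u - T c)]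

theorem neg_two_inner_sub_le (hT : LipschitzWith 1 T) (u c : H) :
    -(2 * ⟪u - T u, u - c⟫) ≤ 2 * ‖c - T c‖ * ‖u - c‖ := by
  have hsplit : ⟪u - T u, u - c⟫ = ‖u - c‖ ^ 2 - ⟪T u - c, u - c⟫ := by
    rw [show u - T u = (u - c) - (T u - c) by abel, inner_sub_left, real_inner_self_eq_norm_sq]
  have hTu : ‖T u - c‖ ≤ ‖u - c‖ + ‖c - T c‖ :=
    calc ‖T u - c‖ ≤ ‖T u - T c‖ + ‖T c - c‖ := norm_sub_le_norm_sub_add_norm_sub _ _ _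
      _ ≤ ‖u - c‖ + ‖c - T c‖ := by
        gcongr
        · simpa using hT.norm_sub_le u c
        · exact (norm_sub_rev _ _).le
  have hcs := real_inner_le_norm (T u - c) (u - c)
  nlinarith [norm_nonneg (u - c)]

variable {lam : ℝ} {v : ℝ → H}

theorem hasDerivAt_norm_sub_sq {t : ℝ} (hv : HasDerivAt v (-(1 / lam) • (v t - T (v t))) t)
    (c : H) : HasDerivAt (fun r => ‖v r - c‖ ^ 2) (-(2 / lam) * ⟪v t - T (v t), v t - c⟫) t := by
  convert (hv.sub_const c).norm_sq using 1
  rw [real_inner_smul_right, real_inner_comm]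
  ring

def chernoffBound (C lam : ℝ) (n : ℕ) (t : ℝ) : ℝ := C ^ 2 * (lam * t + (n * lam - t) ^ 2)

theorem hasDerivAt_chernoffBound_succ (C : ℝ) (hlam : lam ≠ 0) (n : ℕ) (t : ℝ) :
    HasDerivAt (chernoffBound C lam (n + 1))
      ((chernoffBound C lam n t - chernoffBound C lam (n + 1) t) / lam) t := by
  refine ((((hasDerivAt_id' t).const_mul lam).add
    (((hasDerivAt_id' t).const_sub (((n + 1 : ℕ) : ℝ) * lam)).pow 2)).const_mul (C ^ 2))
    |>.congr_deriv ?_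
  simp only [chernoffBound]
  field_simp
  push_cast
  ring

theorem norm_sub_initial_sq_le (hT : LipschitzWith 1 T) (hlam : 0 < lam)
    (hv : ∀ t, 0 ≤ t → HasDerivAt v (-(1 / lam) • (v t - T (v t))) t) {t : ℝ} (ht : 0 ≤ t) :
    ‖v t - v 0‖ ^ 2 ≤ chernoffBound (‖v 0 - T (v 0)‖ / lam) lam 0 t := by
  set C := ‖v 0 - T (v 0)‖ / lam with hC
  have hsq : ‖v t - v 0‖ ^ 2 ≤ (C * (t - 0)) ^ 2 := by
    refine le_sq_of_deriv_le_two_mul_sqrt (by positivity) ht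
      (fun x hx => hasDerivAt_norm_sub_sq (hv x hx.1) _) (fun x _ => ?_) (by simp)
    rw [Real.sqrt_sq (norm_nonneg _)]
    calc -(2 / lam) * ⟪v x - T (v x), v x - v 0⟫ = -(2 * ⟪v x - T (v x), v x - v 0⟫) / lam := by
          ring
      _ ≤ 2 * ‖v 0 - T (v 0)‖ * ‖v x - v 0‖ / lam :=
          div_le_div_of_nonneg_right (neg_two_inner_sub_le hT _ _) hlam.le
      _ = 2 * C * ‖v x - v 0‖ := by
          rw [hC]
          ring
  have hCt : 0 ≤ C ^ 2 * (lam * t) := by positivity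
  simp only [chernoffBound, Nat.cast_zero, zero_mul, zero_sub, neg_sq, sub_zero] at hsq ⊢
  nlinarith

theorem norm_sub_iterate_sq_le (hT : LipschitzWith 1 T) (hlam : 0 < lam)
    (hv : ∀ t, 0 ≤ t → HasDerivAt v (-(1 / lam) • (v t - T (v t))) t) (n : ℕ) {t : ℝ}
    (ht : 0 ≤ t) : ‖v t - T^[n] (v 0)‖ ^ 2 ≤ chernoffBound (‖v 0 - T (v 0)‖ / lam) lam n t := by
  set C := ‖v 0 - T (v 0)‖ / lam
  induction n generalizing t with
  | zero => simpa using norm_sub_initial_sq_le hT hlam hv ht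
  | succ n ih =>
    refine le_of_mul_deriv_add_le hlam ht (fun x hx => hasDerivAt_norm_sub_sq (hv x hx.1) _)
      (fun x _ => hasDerivAt_chernoffBound_succ C hlam.ne' n x) (fun x hx => ?_) ?_
    · rw [Function.iterate_succ_apply']
      calc lam * (-(2 / lam) * ⟪v x - T (v x), v x - T (T^[n] (v 0))⟫)
            + ‖v x - T (T^[n] (v 0))‖ ^ 2
          = ‖v x - T (T^[n] (v 0))‖ ^ 2 - 2 * ⟪v x - T (v x), v x - T (T^[n] (v 0))⟫ := by
            field_simp
            ring
        _ ≤ ‖v x - T^[n] (v 0)‖ ^ 2 := norm_sub_sq_sub_two_inner_le hT _ _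
        _ ≤ chernoffBound C lam n x := ih hx.1
        _ = lam * ((chernoffBound C lam n x - chernoffBound C lam (n + 1) x) / lam)
            + chernoffBound C lam (n + 1) x := by
            field_simp
            ring
    · have hdist := dist_iterate_le_mul_dist hT (v 0) (n + 1)
      rw [dist_eq_norm, dist_eq_norm, ← div_mul_cancel₀ ‖v 0 - T (v 0)‖ hlam.ne'] at hdist
      simp only [sub_zero, chernoffBound, mul_zero, zero_add]
      calc ‖v 0 - T^[n + 1] (v 0)‖ ^ 2 ≤ ((n + 1 : ℕ) * (C * lam)) ^ 2 :=
            pow_le_pow_left₀ (norm_nonneg _) hdist 2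
        _ = _ := by ring

end Hilbert

theorem stmt8_general {H : Type*} [NormedAddCommGroup H] [InnerProductSpace ℝ H]
    (T : H → H) (hT : ∀ x y : H, ‖T x - T y‖ ≤ ‖x - y‖)
    (lam : ℝ) (hlam : 0 < lam)
    (v : ℝ → H) (v₀ : H) (hv₀ : v 0 = v₀)
    (hv : ∀ t : ℝ, 0 ≤ t → HasDerivAt v (-(1 / lam) • (v t - T (v t))) t) :
    ∀ (n : ℕ) (t : ℝ), 0 ≤ t →
      ‖v t - T^[n] v₀‖ ≤
        (1 / lam) * ‖v₀ - T v₀‖ * Real.sqrt (lam * t + ((n : ℝ) * lam - t) ^ 2) := by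
  intro n t ht
  subst hv₀
  have hT : LipschitzWith 1 T :=
    LipschitzWith.mk_one fun x y => by simpa only [dist_eq_norm] using hT x y
  calc ‖v t - T^[n] (v 0)‖ ≤ √(chernoffBound (‖v 0 - T (v 0)‖ / lam) lam n t) :=
        Real.le_sqrt_of_sq_le (norm_sub_iterate_sq_le hT hlam hv n ht)
    _ = _ := by
        rw [chernoffBound, Real.sqrt_mul (sq_nonneg _), Real.sqrt_sq (by positivity)]
        ring

/-- Chernoff's estimate: if `T` is nonexpansive on a real Hilbert space and
`v` solves `v′ = −(1/λ)(I − T)v` with `v(0) = v₀`, then for every `n` and `t ≥ 0`,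
`‖v(t) − Tⁿv₀‖ ≤ (1/λ)‖v₀ − Tv₀‖ √(λt + (nλ − t)²)`. -/
theorem stmt8 {H : Type*} [NormedAddCommGroup H] [InnerProductSpace ℝ H] [CompleteSpace H]
    (T : H → H) (hT : ∀ x y : H, ‖T x - T y‖ ≤ ‖x - y‖)
    (lam : ℝ) (hlam : 0 < lam)
    (v : ℝ → H) (v₀ : H) (hv₀ : v 0 = v₀)
    (hv : ∀ t : ℝ, 0 ≤ t → HasDerivAt v (-(1 / lam) • (v t - T (v t))) t) :
    ∀ (n : ℕ) (t : ℝ), 0 ≤ t →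
      ‖v t - T^[n] v₀‖ ≤
        (1 / lam) * ‖v₀ - T v₀‖ * Real.sqrt (lam * t + ((n : ℝ) * lam - t) ^ 2) :=
  stmt8_general T hT lam hlam v v₀ hv₀ hv
end

section
/- (Güler's lemma) Let H be a real Hilbert space, f : H → ℝ, let λ_n > 0 (n ≥ 1) be stepsizes with σ_n = λ_1 + ⋯ + λ_n, and let (x_n)_{n≥0} be a sequence in H such that for every n ≥ 1 and every z ∈ H, f(z) ≥ f(x_n) + ⟨(x_{n−1} − x_n)/λ_n, z − x_n⟩ (i.e., (x_{n−1} − x_n)/λ_n is a subgradient of f at x_n, so (x_n) is a proximal sequence for ∂f). Then for every u ∈ H and every n ≥ 1: f(x_n) − f(u) ≤ ‖u − x_0‖²/(2σ_n) − ‖u − x_n‖²/(2σ_n) − (σ_n/2)‖y_n‖², where y_n = (x_n − x_{n−1})/λ_n. -/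
open RealInnerProductSpace Finset

/-!
With `p_k = (x_{k-1} - x_k)/λ_k ∈ ∂f(x_k)`, expanding `‖u - x_{k-1}‖² = ‖u - x_k - λ_k p_k‖²` and
using the subgradient inequality at `u` gives the one-step estimate
`λ_k (f(x_k) - f(u)) + ‖u - x_k‖²/2 + λ_k²‖p_k‖²/2 ≤ ‖u - x_{k-1}‖²/2`.
The subgradient inequality at `x_{k-1}` shows that `f(x_k)` decreases by at least `λ_k ‖p_k‖²`,
and monotonicity of `∂f` shows that `‖p_k‖` is nonincreasing. With these, the quantity
`σ_k (f(x_k) - f(u)) + ‖u - x_k‖²/2 + σ_k²‖p_k‖²/2` is nonincreasing in `k` and bounded by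
`‖u - x_0‖²/2`; dividing by `σ_n` gives the claim.
-/

section

variable {H : Type*} [NormedAddCommGroup H] [InnerProductSpace ℝ H]

def HasSubgradientAt (f : H → ℝ) (p x : H) : Prop :=
  ∀ z, f x + ⟪p, z - x⟫ ≤ f z

namespace HasSubgradientAt

variable {f : H → ℝ} {a b p q : H} {t : ℝ}

theorem inner_sub_sub_nonneg (hp : HasSubgradientAt f p a) (hq : HasSubgradientAt f q b) :
    0 ≤ ⟪p - q, a - b⟫ := by
  have h₁ := hp b
  have h₂ := hq a
  rw [← neg_sub a b, inner_neg_right] at h₁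
  rw [inner_sub_left]
  linarith

theorem add_mul_norm_sq_le (hp : HasSubgradientAt f p b) (hab : a = b + t • p) :
    f b + t * ‖p‖ ^ 2 ≤ f a := by
  subst hab
  simpa only [add_sub_cancel_left, real_inner_smul_right, real_inner_self_eq_norm_sq] using
    hp (b + t • p)

theorem norm_le_of_proximal_step (hp : HasSubgradientAt f p a) (hq : HasSubgradientAt f q b)
    (ht : 0 < t) (hab : a = b + t • q) : ‖q‖ ≤ ‖p‖ := by
  have hmono := hp.inner_sub_sub_nonneg hq
  rw [hab, add_sub_cancel_left, real_inner_smul_right, inner_sub_left,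
    real_inner_self_eq_norm_sq] at hmono
  have hq_sq : ‖q‖ ^ 2 ≤ ⟪p, q⟫ := by nlinarith
  nlinarith [real_inner_le_norm p q, norm_nonneg p, norm_nonneg q]

theorem proximal_step_energy_le (hp : HasSubgradientAt f p b) (ht : 0 ≤ t)
    (hab : a = b + t • p) (u : H) :
    t * (f b - f u) + ‖u - b‖ ^ 2 / 2 + t ^ 2 / 2 * ‖p‖ ^ 2 ≤ ‖u - a‖ ^ 2 / 2 := by
  have hexpand : ‖u - a‖ ^ 2 = ‖u - b‖ ^ 2 - 2 * t * ⟪p, u - b⟫ + t ^ 2 * ‖p‖ ^ 2 := by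
    rw [hab, ← sub_sub, norm_sub_sq_real, real_inner_smul_right, norm_smul, mul_pow,
      Real.norm_eq_abs, sq_abs, real_inner_comm]
    ring
  nlinarith [hp u]

end HasSubgradientAt

theorem proximal_energy_le {f : H → ℝ} {lam : ℕ → ℝ} {x p : ℕ → H}
    (hlam : ∀ k, 0 < lam (k + 1)) (hsub : ∀ k, HasSubgradientAt f (p (k + 1)) (x (k + 1)))
    (hx : ∀ k, x k = x (k + 1) + lam (k + 1) • p (k + 1)) (u : H) (m : ℕ) :
    (∑ i ∈ range (m + 1), lam (i + 1)) * (f (x (m + 1)) - f u) + ‖u - x (m + 1)‖ ^ 2 / 2 +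
        (∑ i ∈ range (m + 1), lam (i + 1)) ^ 2 / 2 * ‖p (m + 1)‖ ^ 2 ≤
      ‖u - x 0‖ ^ 2 / 2 := by
  induction m with
  | zero => simpa using (hsub 0).proximal_step_energy_le (hlam 0).le (hx 0) u
  | succ m ih =>
    set σ := ∑ i ∈ range (m + 1), lam (i + 1)
    have hσ : 0 ≤ σ := sum_nonneg fun i _ => (hlam i).le
    have hstep := (hsub (m + 1)).proximal_step_energy_le (hlam (m + 1)).le (hx (m + 1)) u
    have hdescent := (hsub (m + 1)).add_mul_norm_sq_le (hx (m + 1))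
    have hnorm := (hsub m).norm_le_of_proximal_step (hsub (m + 1)) (hlam (m + 1)) (hx (m + 1))
    have hnorm_sq : ‖p (m + 2)‖ ^ 2 ≤ ‖p (m + 1)‖ ^ 2 :=
      pow_le_pow_left₀ (norm_nonneg _) hnorm 2
    rw [sum_range_succ]
    nlinarith [mul_le_mul_of_nonneg_left hnorm_sq (sq_nonneg σ),
      mul_le_mul_of_nonneg_left hdescent hσ]

end

theorem stmt10_general {H : Type*} [NormedAddCommGroup H] [InnerProductSpace ℝ H]
    (f : H → ℝ) (lam : ℕ → ℝ) (hlam : ∀ n : ℕ, 1 ≤ n → 0 < lam n)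
    (x : ℕ → H)
    (hsub : ∀ n : ℕ, 1 ≤ n → ∀ z : H,
      f (x n) + ⟪(lam n)⁻¹ • (x (n - 1) - x n), z - x n⟫ ≤ f z) :
    ∀ (u : H) (n : ℕ), 1 ≤ n →
      f (x n) - f u ≤
        ‖u - x 0‖ ^ 2 / (2 * ∑ i ∈ range n, lam (i + 1)) -
          ‖u - x n‖ ^ 2 / (2 * ∑ i ∈ range n, lam (i + 1)) -
          ((∑ i ∈ range n, lam (i + 1)) / 2) * ‖(lam n)⁻¹ • (x n - x (n - 1))‖ ^ 2 := by
  intro u n hn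
  obtain ⟨m, rfl⟩ := Nat.exists_eq_add_of_le' hn
  set p : ℕ → H := fun k => (lam k)⁻¹ • (x (k - 1) - x k)
  have hlam' (k : ℕ) : 0 < lam (k + 1) := hlam (k + 1) k.succ_pos
  have hx (k : ℕ) : x k = x (k + 1) + lam (k + 1) • p (k + 1) := by
    simp [p, smul_smul, mul_inv_cancel₀ (hlam' k).ne']
  have henergy := proximal_energy_le hlam' (p := p) (fun k => hsub (k + 1) k.succ_pos) hx u m
  have hy : ‖(lam (m + 1))⁻¹ • (x (m + 1) - x (m + 1 - 1))‖ = ‖p (m + 1)‖ := by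
    rw [← norm_neg, ← smul_neg, neg_sub]
  set σ := ∑ i ∈ range (m + 1), lam (i + 1)
  have hσ : 0 < σ := sum_pos (fun i _ => hlam' i) nonempty_range_add_one
  rw [hy, show ‖u - x 0‖ ^ 2 / (2 * σ) - ‖u - x (m + 1)‖ ^ 2 / (2 * σ) - σ / 2 * ‖p (m + 1)‖ ^ 2 =
      (‖u - x 0‖ ^ 2 / 2 - ‖u - x (m + 1)‖ ^ 2 / 2 - σ ^ 2 / 2 * ‖p (m + 1)‖ ^ 2) / σ by
    field_simp, le_div_iff₀ hσ]
  linarith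

/-- Güler's lemma: for a proximal sequence `(x_n)` for `∂f`, i.e. with
`(x_{n−1} − x_n)/λ_n` a subgradient of `f` at `x_n`, one has, with `σ_n = λ_1 + ⋯ + λ_n`
and `y_n = (x_n − x_{n−1})/λ_n`,
`f(x_n) − f(u) ≤ ‖u − x_0‖²/(2σ_n) − ‖u − x_n‖²/(2σ_n) − (σ_n/2)‖y_n‖²`. -/
theorem stmt10 {H : Type*} [NormedAddCommGroup H] [InnerProductSpace ℝ H] [CompleteSpace H]
    (f : H → ℝ) (lam : ℕ → ℝ) (hlam : ∀ n : ℕ, 1 ≤ n → 0 < lam n)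
    (x : ℕ → H)
    (hsub : ∀ n : ℕ, 1 ≤ n → ∀ z : H,
      f (x n) + ⟪(lam n)⁻¹ • (x (n - 1) - x n), z - x n⟫ ≤ f z) :
    ∀ (u : H) (n : ℕ), 1 ≤ n →
      f (x n) - f u ≤
        ‖u - x 0‖ ^ 2 / (2 * ∑ i ∈ range n, lam (i + 1)) -
          ‖u - x n‖ ^ 2 / (2 * ∑ i ∈ range n, lam (i + 1)) -
          ((∑ i ∈ range n, lam (i + 1)) / 2) * ‖(lam n)⁻¹ • (x n - x (n - 1))‖ ^ 2 :=
  stmt10_general f lam hlam x hsub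
end

section
/- (Brézis–Lions) Let A be a maximal monotone operator on a real Hilbert space H with nonempty solution set S = {x : (x, 0) ∈ A}, and let (x_n) be a proximal sequence for A with stepsizes λ_n > 0. Then for every n ≥ 1, ‖y_n‖ · √τ_n ≤ dist(x_0, S), where y_n = (x_n − x_{n−1})/λ_n and τ_n = λ_1² + ⋯ + λ_n². If moreover Σ λ_n² = ∞, then (x_n) converges weakly to some point x* ∈ S. -/
open RealInnerProductSpace Filter Topology Finset

/-- An operator is maximal monotone: monotone and with no proper monotone extension. -/
def MaximalMonotone {H : Type*} [NormedAddCommGroup H] [InnerProductSpace ℝ H]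
    (A : Set (H × H)) : Prop :=
  MonotoneOp A ∧ ∀ B : Set (H × H), MonotoneOp B → A ⊆ B → B = A

/-- Limit of a bounded real sequence along an ultrafilter. -/
lemma BL.ultra_lim_exists (V : Ultrafilter ℕ) (g : ℕ → ℝ) (M : ℝ) (hg : ∀ n, |g n| ≤ M) :
    ∃ c, Tendsto g V (𝓝 c) := by
  have h1 : ↑(V.map g) ≤ Filter.principal (Set.Icc (-M) M) := by
    rw [Ultrafilter.coe_map, Filter.le_principal_iff, Filter.mem_map]
    exact Filter.univ_mem' fun n => Set.mem_Icc.2 (abs_le.mp (hg n))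
  obtain ⟨c, _, hc⟩ := (isCompact_Icc (a := -M) (b := M)).ultrafilter_le_nhds (V.map g) h1
  exact ⟨c, hc⟩

/-- Weak limit along an ultrafilter of a bounded sequence in a real Hilbert space. -/
lemma BL.exists_weak_ultralimit {H : Type*} [NormedAddCommGroup H] [InnerProductSpace ℝ H]
    [CompleteSpace H] (V : Ultrafilter ℕ) (xs : ℕ → H) (R : ℝ) (hR : ∀ n, ‖xs n‖ ≤ R) :
    ∃ w : H, ∀ y : H, Tendsto (fun n => ⟪xs n, y⟫) V (𝓝 ⟪w, y⟫) := by
  have key : ∀ y : H, ∃ c, Tendsto (fun n => ⟪xs n, y⟫) V (𝓝 c) := fun y =>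
    BL.ultra_lim_exists V _ (R * ‖y‖) fun n => by
      calc |⟪xs n, y⟫| ≤ ‖xs n‖ * ‖y‖ := abs_real_inner_le_norm _ _
        _ ≤ R * ‖y‖ := by gcongr; exact hR n
  choose f hf using key
  have hadd : ∀ y z, f (y + z) = f y + f z := fun y z => by
    have h1 := (hf y).add (hf z)
    have h2 : (fun n => ⟪xs n, y⟫ + ⟪xs n, z⟫) = fun n => ⟪xs n, y + z⟫ := by
      funext n; rw [inner_add_right]
    rw [h2] at h1
    exact tendsto_nhds_unique (hf (y + z)) h1
  have hsmul : ∀ (c : ℝ) (y : H), f (c • y) = c * f y := fun c y => by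
    have h1 := (hf y).const_mul c
    have h2 : (fun n => c * ⟪xs n, y⟫) = fun n => ⟪xs n, c • y⟫ := by
      funext n; rw [real_inner_smul_right]
    rw [h2] at h1
    exact tendsto_nhds_unique (hf (c • y)) h1
  have hbound : ∀ y : H, ‖f y‖ ≤ R * ‖y‖ := fun y => by
    have h1 : Tendsto (fun n => |⟪xs n, y⟫|) V (𝓝 |f y|) := (hf y).abs
    refine le_of_tendsto h1 (Filter.univ_mem' fun n => ?_)
    calc |⟪xs n, y⟫| ≤ ‖xs n‖ * ‖y‖ := abs_real_inner_le_norm _ _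
      _ ≤ R * ‖y‖ := by gcongr; exact hR n
  let F : H →L[ℝ] ℝ := LinearMap.mkContinuous
    { toFun := f, map_add' := hadd, map_smul' := hsmul } R hbound
  refine ⟨(InnerProductSpace.toDual ℝ H).symm F, fun y => ?_⟩
  have : ⟪(InnerProductSpace.toDual ℝ H).symm F, y⟫ = F y :=
    InnerProductSpace.toDual_symm_apply
  rw [this]
  exact hf y

lemma BL.sqrt_tendsto_atTop : Tendsto Real.sqrt atTop atTop := by
  apply tendsto_atTop_atTop.mpr
  intro b
  refine ⟨b^2, fun a ha => ?_⟩
  calc b ≤ |b| := le_abs_self b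
    _ = Real.sqrt (b^2) := (Real.sqrt_sq_eq_abs b).symm
    _ ≤ Real.sqrt a := Real.sqrt_le_sqrt ha

/-- Brézis–Lions: for a proximal sequence of a maximal monotone operator
with nonempty solution set `S = {x | (x, 0) ∈ A}`, one has
`‖y_n‖ √τ_n ≤ dist(x_0, S)`; if moreover `Σ λ_n² = ∞` then `(x_n)` converges weakly to a
point of `S`. -/
theorem stmt11 {H : Type*} [NormedAddCommGroup H] [InnerProductSpace ℝ H] [CompleteSpace H]
    (A : Set (H × H)) (hA : A.Nonempty) (hmax : MaximalMonotone A)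
    (hS : {z : H | (z, 0) ∈ A}.Nonempty)
    (lam : ℕ → ℝ) (hlam : ∀ n : ℕ, 0 < lam (n + 1))
    (x : ℕ → H)
    (hprox : ∀ n : ℕ, (x (n + 1), (lam (n + 1))⁻¹ • (x n - x (n + 1))) ∈ A) :
    (∀ n : ℕ,
      ‖(lam (n + 1))⁻¹ • (x (n + 1) - x n)‖ *
          Real.sqrt (∑ i ∈ range (n + 1), lam (i + 1) ^ 2) ≤
        Metric.infDist (x 0) {z : H | (z, 0) ∈ A}) ∧
    (¬ Summable (fun n : ℕ => lam (n + 1) ^ 2) →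
      ∃ xstar : H, (xstar, 0) ∈ A ∧
        ∀ y : H, Tendsto (fun n => ⟪x n, y⟫) atTop (𝓝 ⟪xstar, y⟫)) := by
  have hmono := hmax.1
  set S : Set H := {z : H | (z, 0) ∈ A} with hSdef
  set ty : ℕ → H := fun n => (lam (n + 1))⁻¹ • (x n - x (n + 1)) with hty
  have hxdiff : ∀ n, x n - x (n + 1) = lam (n + 1) • ty n := fun n => by
    rw [hty]; simp [smul_smul, mul_inv_cancel₀ (hlam n).ne']
  -- Fejér property
  have hfej : ∀ n, ∀ z ∈ S,
      ‖x (n+1) - z‖^2 + ‖x n - x (n+1)‖^2 ≤ ‖x n - z‖^2 := by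
    intro n z hz
    have h1 : (0:ℝ) ≤ ⟪x n - x (n+1), x (n+1) - z⟫ := by
      have h0 := hmono _ (hprox n) _ hz
      simp only [sub_zero] at h0
      have h2 : ⟪ty n, x (n+1) - z⟫ = (lam (n+1))⁻¹ * ⟪x n - x (n+1), x (n+1) - z⟫ := by
        rw [hty]; exact real_inner_smul_left _ _ _
      nlinarith [inv_pos.2 (hlam n), h0, h2]
    have hid : ‖x n - z‖^2 = ‖x n - x (n+1)‖^2 + 2 * ⟪x n - x (n+1), x (n+1) - z⟫
        + ‖x (n+1) - z‖^2 := by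
      have h3 : x n - z = (x n - x (n+1)) + (x (n+1) - z) := by abel
      rw [h3, norm_add_sq_real]
    nlinarith
  -- ‖ty n‖ is antitone
  have hymon : ∀ n, ‖ty (n+1)‖ ≤ ‖ty n‖ := by
    intro n
    have h0 := hmono _ (hprox (n+1)) _ (hprox n)
    simp only at h0
    have hx2 : x (n+2) - x (n+1) = -(lam (n+2) • ty (n+1)) := by
      rw [← hxdiff (n+1)]; abel
    rw [hx2, inner_neg_right, real_inner_smul_right] at h0
    have h1 : ⟪ty (n+1) - ty n, ty (n+1)⟫ ≤ 0 := by
      nlinarith [hlam (n+1)]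
    have h2 : ‖ty (n+1)‖^2 ≤ ⟪ty n, ty (n+1)⟫ := by
      rw [inner_sub_left, real_inner_self_eq_norm_sq] at h1; linarith
    have h3 : ⟪ty n, ty (n+1)⟫ ≤ ‖ty n‖ * ‖ty (n+1)‖ := real_inner_le_norm _ _
    rcases eq_or_lt_of_le (norm_nonneg (ty (n+1))) with h4 | h4
    · rw [← h4]; exact norm_nonneg _
    · nlinarith
  have hyanti : ∀ i n, i ≤ n → ‖ty n‖ ≤ ‖ty i‖ := fun i n h =>
    antitone_nat_of_succ_le (f := fun n => ‖ty n‖) hymon h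
  -- Part 1 estimate against any z ∈ S
  have part1' : ∀ n : ℕ, ∀ z ∈ S,
      ‖ty n‖ * Real.sqrt (∑ i ∈ range (n + 1), lam (i + 1) ^ 2) ≤ ‖x 0 - z‖ := by
    intro n z hz
    have hsum : ∑ i ∈ range (n+1), ‖x i - x (i+1)‖^2 ≤ ‖x 0 - z‖^2 := by
      have key : ∀ m, ∑ i ∈ range m, ‖x i - x (i+1)‖^2 + ‖x m - z‖^2 ≤ ‖x 0 - z‖^2 := by
        intro m
        induction m with
        | zero => simp
        | succ k ih =>
          rw [Finset.sum_range_succ]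
          have := hfej k z hz
          linarith
      have := key (n+1)
      nlinarith [sq_nonneg ‖x (n+1) - z‖]
    have hterm : ∀ i, ‖x i - x (i+1)‖^2 = lam (i+1)^2 * ‖ty i‖^2 := fun i => by
      rw [hxdiff i, norm_smul, Real.norm_eq_abs, abs_of_pos (hlam i), mul_pow]
    have hlow : ∀ i ∈ range (n+1), lam (i+1)^2 * ‖ty n‖^2 ≤ ‖x i - x (i+1)‖^2 := by
      intro i hi
      rw [hterm i]
      have h5 : ‖ty n‖ ≤ ‖ty i‖ := hyanti i n (Nat.lt_succ_iff.mp (Finset.mem_range.mp hi))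
      have h6 : ‖ty n‖^2 ≤ ‖ty i‖^2 := pow_le_pow_left₀ (norm_nonneg _) h5 2
      exact mul_le_mul_of_nonneg_left h6 (sq_nonneg _)
    have hmain : ‖ty n‖^2 * (∑ i ∈ range (n+1), lam (i+1)^2) ≤ ‖x 0 - z‖^2 := by
      rw [Finset.mul_sum]
      calc ∑ i ∈ range (n+1), ‖ty n‖^2 * lam (i+1)^2
          = ∑ i ∈ range (n+1), lam (i+1)^2 * ‖ty n‖^2 :=
            Finset.sum_congr rfl fun i _ => mul_comm _ _
        _ ≤ ∑ i ∈ range (n+1), ‖x i - x (i+1)‖^2 := Finset.sum_le_sum hlow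
        _ ≤ ‖x 0 - z‖^2 := hsum
    have h1 : ‖ty n‖ * Real.sqrt (∑ i ∈ range (n+1), lam (i+1)^2)
        = Real.sqrt (‖ty n‖^2 * (∑ i ∈ range (n+1), lam (i+1)^2)) := by
      rw [Real.sqrt_mul (sq_nonneg _), Real.sqrt_sq (norm_nonneg _)]
    rw [h1]
    calc Real.sqrt (‖ty n‖^2 * (∑ i ∈ range (n+1), lam (i+1)^2))
        ≤ Real.sqrt (‖x 0 - z‖^2) := Real.sqrt_le_sqrt hmain
      _ = ‖x 0 - z‖ := Real.sqrt_sq (norm_nonneg _)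
  have hnorm : ∀ n, ‖(lam (n + 1))⁻¹ • (x (n + 1) - x n)‖ = ‖ty n‖ := fun n => by
    rw [hty]
    simp only [← norm_neg ((lam (n+1))⁻¹ • (x n - x (n+1))), ← smul_neg, neg_sub]
  have part1 : ∀ n : ℕ,
      ‖(lam (n + 1))⁻¹ • (x (n + 1) - x n)‖ *
          Real.sqrt (∑ i ∈ range (n + 1), lam (i + 1) ^ 2) ≤
        Metric.infDist (x 0) S := by
    intro n
    rw [hnorm n, Metric.infDist_eq_iInf]
    have : Nonempty S := hS.to_subtype
    apply le_ciInf
    intro z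
    rw [dist_eq_norm]
    exact part1' n z z.2
  refine ⟨part1, ?_⟩
  -- Part 2
  intro hns
  obtain ⟨z0, hz0⟩ := hS
  -- x is bounded
  have hdanti : ∀ z ∈ S, ∀ n, ‖x (n+1) - z‖ ≤ ‖x n - z‖ := by
    intro z hz n
    have := hfej n z hz
    have h2 := sq_nonneg ‖x n - x (n+1)‖
    nlinarith [norm_nonneg (x (n+1) - z), norm_nonneg (x n - z)]
  have hdanti' : ∀ z ∈ S, Antitone (fun n => ‖x n - z‖) := fun z hz =>
    antitone_nat_of_succ_le (hdanti z hz)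
  set R : ℝ := ‖x 0 - z0‖ + ‖z0‖ with hR
  have hxb : ∀ n, ‖x n‖ ≤ R := by
    intro n
    calc ‖x n‖ = ‖(x n - z0) + z0‖ := by rw [sub_add_cancel]
      _ ≤ ‖x n - z0‖ + ‖z0‖ := norm_add_le _ _
      _ ≤ ‖x 0 - z0‖ + ‖z0‖ := by
          have := hdanti' z0 hz0 (Nat.zero_le n)
          simpa using add_le_add_right this ‖z0‖
  -- ‖ty n‖ → 0
  have hτpos : ∀ n, (0:ℝ) < ∑ i ∈ range (n+1), lam (i+1)^2 := by
    intro n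
    apply Finset.sum_pos' (fun i _ => sq_nonneg _)
    exact ⟨0, Finset.mem_range.2 (Nat.succ_pos n), pow_pos (hlam 0) 2⟩
  have hτtop : Tendsto (fun n => ∑ i ∈ range (n+1), lam (i+1)^2) atTop atTop := by
    have h1 : Tendsto (fun n => ∑ i ∈ range n, lam (i+1)^2) atTop atTop :=
      (not_summable_iff_tendsto_nat_atTop_of_nonneg (fun n => sq_nonneg _)).1 hns
    exact (tendsto_add_atTop_iff_nat (f := fun n => ∑ i ∈ range n, lam (i+1)^2) 1).2 h1
  have hsqrttop : Tendsto (fun n => Real.sqrt (∑ i ∈ range (n+1), lam (i+1)^2)) atTop atTop :=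
    BL.sqrt_tendsto_atTop.comp hτtop
  have hy0 : Tendsto (fun n => ‖ty n‖) atTop (𝓝 0) := by
    apply squeeze_zero (fun n => norm_nonneg _)
      (g := fun n => ‖x 0 - z0‖ / Real.sqrt (∑ i ∈ range (n+1), lam (i+1)^2))
    · intro n
      have h1 := part1' n z0 hz0
      have h2 : (0:ℝ) < Real.sqrt (∑ i ∈ range (n+1), lam (i+1)^2) :=
        Real.sqrt_pos.2 (hτpos n)
      rw [le_div_iff₀ h2]
      exact h1
    · exact Tendsto.div_atTop tendsto_const_nhds hsqrttop
  -- shifted sequence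
  set xs : ℕ → H := fun n => x (n+1) with hxs
  have hxsb : ∀ n, ‖xs n‖ ≤ R := fun n => hxb (n+1)
  -- limits of distances to points of S
  have hLex : ∀ z : S, ∃ l, Tendsto (fun n => ‖x n - (z:H)‖) atTop (𝓝 l) := by
    intro z
    refine ⟨⨅ n, ‖x n - (z:H)‖, tendsto_atTop_ciInf (hdanti' z z.2) ?_⟩
    exact ⟨0, fun r ⟨n, hn⟩ => hn ▸ norm_nonneg _⟩
  choose ell hell using hLex
  have hellsq : ∀ z : S, Tendsto (fun n => ‖xs n - (z:H)‖^2) atTop (𝓝 ((ell z)^2)) := by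
    intro z
    have h1 : Tendsto (fun n => ‖x n - (z:H)‖^2) atTop (𝓝 ((ell z)^2)) := (hell z).pow 2
    exact (tendsto_add_atTop_iff_nat (f := fun n => ‖x n - (z:H)‖^2) 1).2 h1
  -- per-ultrafilter weak limits
  have main : ∀ V : Ultrafilter ℕ, ↑V ≤ (atTop : Filter ℕ) →
      ∃ w : H, ∃ m : ℝ, (w, 0) ∈ A ∧
        (∀ y : H, Tendsto (fun n => ⟪xs n, y⟫) V (𝓝 ⟪w, y⟫)) ∧
        (∀ z : S, (ell z)^2 = m - 2 * ⟪w, (z:H)⟫ + ‖(z:H)‖^2) := by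
    intro V hV
    obtain ⟨w, hw⟩ := BL.exists_weak_ultralimit V xs R hxsb
    obtain ⟨m, hm⟩ := BL.ultra_lim_exists V (fun n => ‖xs n‖^2) (R^2) (fun n => by
      rw [abs_of_nonneg (sq_nonneg _)]
      exact pow_le_pow_left₀ (norm_nonneg _) (hxsb n) 2)
    have hwS : (w, 0) ∈ A := by
      -- the key variational inequality
      have hineq : ∀ q ∈ A, (0:ℝ) ≤ ⟪(0:H) - q.2, w - q.1⟫ := by
        intro q hq
        have hterm : ∀ n, (0:ℝ) ≤ ⟪ty n, xs n - q.1⟫ - (⟪q.2, xs n⟫ - ⟪q.2, q.1⟫) := by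
          intro n
          have h0 := hmono _ (hprox n) _ hq
          have h1 : ⟪ty n - q.2, x (n+1) - q.1⟫
              = ⟪ty n, xs n - q.1⟫ - (⟪q.2, xs n⟫ - ⟪q.2, q.1⟫) := by
            rw [hxs]
            simp only [inner_sub_left, inner_sub_right]
            ring
          rw [← h1]
          exact h0
        have hw' : Tendsto (fun n => ⟪q.2, xs n⟫) V (𝓝 ⟪q.2, w⟫) := by
          have hfe : (fun n => ⟪q.2, xs n⟫) = fun n => ⟪xs n, q.2⟫ := by
            funext n; rw [real_inner_comm]
          rw [hfe, real_inner_comm w q.2]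
          exact hw q.2
        have hten : Tendsto (fun n => ⟪ty n, xs n - q.1⟫ - (⟪q.2, xs n⟫ - ⟪q.2, q.1⟫)) V
            (𝓝 (0 - (⟪q.2, w⟫ - ⟪q.2, q.1⟫))) := by
          apply Tendsto.sub
          · have hbnd : ∀ n, ‖⟪ty n, xs n - q.1⟫‖ ≤ ‖ty n‖ * (R + ‖q.1‖) := by
              intro n
              calc ‖⟪ty n, xs n - q.1⟫‖ ≤ ‖ty n‖ * ‖xs n - q.1‖ :=
                    abs_real_inner_le_norm _ _
                _ ≤ ‖ty n‖ * (R + ‖q.1‖) := by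
                    apply mul_le_mul_of_nonneg_left _ (norm_nonneg _)
                    calc ‖xs n - q.1‖ ≤ ‖xs n‖ + ‖q.1‖ := norm_sub_le _ _
                      _ ≤ R + ‖q.1‖ := by gcongr; exact hxsb n
            have h2 : Tendsto (fun n => ⟪ty n, xs n - q.1⟫) atTop (𝓝 0) :=
              squeeze_zero_norm hbnd (by simpa using hy0.mul_const (R + ‖q.1‖))
            exact h2.mono_left hV
          · exact hw'.sub tendsto_const_nhds
        have hfin := ge_of_tendsto' hten hterm
        have heq2 : ⟪(0:H) - q.2, w - q.1⟫ = 0 - (⟪q.2, w⟫ - ⟪q.2, q.1⟫) := by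
          simp only [inner_sub_left, inner_sub_right, inner_zero_left]
          ring
        rw [heq2]
        exact hfin
      -- maximality
      have hBmono : MonotoneOp (insert (w, (0:H)) A) := by
        intro p hp q hq
        rcases Set.mem_insert_iff.1 hp with hp1 | hp1 <;>
          rcases Set.mem_insert_iff.1 hq with hq1 | hq1
        · rw [hp1, hq1]; simp
        · rw [hp1]; exact hineq q hq1
        · rw [hq1]
          have := hineq p hp1
          have heq : ⟪p.2 - (0:H), p.1 - w⟫ = ⟪(0:H) - p.2, w - p.1⟫ := by
            rw [show p.2 - (0:H) = -((0:H) - p.2) by abel,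
              show p.1 - w = -(w - p.1) by abel, inner_neg_neg]
          rw [heq]; exact this
        · exact hmono p hp1 q hq1
      have hBA := hmax.2 _ hBmono (Set.subset_insert _ _)
      rw [← hBA]
      exact Set.mem_insert _ _
    refine ⟨w, m, hwS, hw, ?_⟩
    intro z
    have h1 : Tendsto (fun n => ‖xs n - (z:H)‖^2) V (𝓝 ((ell z)^2)) :=
      (hellsq z).mono_left hV
    have h2 : Tendsto (fun n => ‖xs n‖^2 - 2 * ⟪xs n, (z:H)⟫ + ‖(z:H)‖^2) V
        (𝓝 (m - 2 * ⟪w, (z:H)⟫ + ‖(z:H)‖^2)) :=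
      Tendsto.add (hm.sub ((hw (z:H)).const_mul 2)) tendsto_const_nhds
    have h3 : (fun n => ‖xs n - (z:H)‖^2)
        = fun n => ‖xs n‖^2 - 2 * ⟪xs n, (z:H)⟫ + ‖(z:H)‖^2 := by
      funext n; exact norm_sub_sq_real _ _
    rw [h3] at h1
    exact tendsto_nhds_unique h1 h2
  choose w m hwA hwten heq using main
  -- all ultrafilter weak limits coincide
  have huniq : ∀ (V1 : Ultrafilter ℕ) (h1 : ↑V1 ≤ (atTop : Filter ℕ))
      (V2 : Ultrafilter ℕ) (h2 : ↑V2 ≤ (atTop : Filter ℕ)), w V1 h1 = w V2 h2 := by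
    intro V1 h1 V2 h2
    set w1 := w V1 h1
    set w2 := w V2 h2
    have hz1 : ((w1 : H), (0:H)) ∈ A := hwA V1 h1
    have hz2 : ((w2 : H), (0:H)) ∈ A := hwA V2 h2
    have e11 := heq V1 h1 ⟨w1, hz1⟩
    have e12 := heq V1 h1 ⟨w2, hz2⟩
    have e21 := heq V2 h2 ⟨w1, hz1⟩
    have e22 := heq V2 h2 ⟨w2, hz2⟩
    simp only at e11 e12 e21 e22
    have hkey : ⟪w1 - w2, w1 - w2⟫ = 0 := by
      rw [inner_sub_left, inner_sub_right, inner_sub_right]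
      rw [real_inner_comm w2 w1] at *
      have hn1 : ⟪w1, w1⟫ = ‖w1‖^2 := real_inner_self_eq_norm_sq _
      have hn2 : ⟪w2, w2⟫ = ‖w2‖^2 := real_inner_self_eq_norm_sq _
      linarith
    have : w1 - w2 = 0 := inner_self_eq_zero.1 hkey
    exact sub_eq_zero.1 this
  -- conclude
  have hne : (atTop : Filter ℕ).NeBot := atTop_neBot
  set U0 : Ultrafilter ℕ := Ultrafilter.of atTop with hU0
  have hU0le : ↑U0 ≤ (atTop : Filter ℕ) := Ultrafilter.of_le atTop
  refine ⟨w U0 hU0le, hwA U0 hU0le, ?_⟩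
  intro y
  have hxsconv : Tendsto (fun n => ⟪xs n, y⟫) atTop (𝓝 ⟪w U0 hU0le, y⟫) := by
    rw [tendsto_iff_ultrafilter]
    intro V hV
    have := hwten V hV y
    rwa [huniq V hV U0 hU0le] at this
  exact (tendsto_add_atTop_iff_nat (f := fun n => ⟪x n, y⟫) 1).1 hxsconv
end

section
/- Let H be a real Hilbert space, f : H → ℝ, let λ_n > 0 be stepsizes with Σ λ_n = ∞, and let (z_n)_{n≥0} be a sequence in H with z_{n+1} = z_n + λ_n w_n, where for every n and every y ∈ H, f(y) ≥ f(z_n) + ⟨−w_n, y − z_n⟩ (i.e., −w_n is a subgradient of f at z_n, so (z_n) is an Euler/explicit subgradient sequence). If either Σ ‖z_{n+1} − z_n‖² < ∞ or λ_n‖w_n‖² → 0, then liminf_{n→∞} f(z_n) ≤ f(y) for every y ∈ H, i.e., liminf_{n→∞} f(z_n) = inf f. -/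
/-!
If `liminf f(z_n) > r > f(y)`, then eventually `f(z_n) > r`, and the subgradient inequality gives
`‖z_{n+1} - y‖² ≤ ‖z_n - y‖² - 2 (r - f y) λ_n + ‖z_{n+1} - z_n‖²`. Under the first hypothesis the
last term is summable; under the second it is eventually at most `(r - f y) λ_n`. Either way,
telescoping bounds the partial sums of `λ_n`, contradicting `Σ λ_n = ∞`.
-/

open RealInnerProductSpace Filter Topology Finset

lemma summable_of_le_sub_succ_add {a c d : ℕ → ℝ} (ha : ∀ n, 0 ≤ a n) (hc : ∀ n, 0 ≤ c n)
    (hd₀ : ∀ n, 0 ≤ d n) (hd : Summable d) (h : ∀ n, c n ≤ a n - a (n + 1) + d n) :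
    Summable c := by
  refine summable_of_sum_range_le hc (c := a 0 + ∑' n, d n) fun N => ?_
  calc ∑ i ∈ range N, c i ≤ ∑ i ∈ range N, (a i - a (i + 1) + d i) := sum_le_sum fun i _ => h i
    _ = a 0 - a N + ∑ i ∈ range N, d i := by rw [sum_add_distrib, sum_range_sub']
    _ ≤ a 0 + ∑' n, d n := by linarith [ha N, hd.sum_le_tsum (range N) fun i _ => hd₀ i]

lemma summable_of_eventually_le_sub_succ_add {a c d : ℕ → ℝ} (ha : ∀ n, 0 ≤ a n)
    (hc : ∀ n, 0 ≤ c n) (hd₀ : ∀ n, 0 ≤ d n) (hd : Summable d)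
    (h : ∀ᶠ n in atTop, c n ≤ a n - a (n + 1) + d n) : Summable c := by
  obtain ⟨N, hN⟩ := eventually_atTop.mp h
  refine (summable_nat_add_iff N).mp <| summable_of_le_sub_succ_add (fun n => ha (n + N))
    (fun n => hc (n + N)) (fun n => hd₀ (n + N)) ((summable_nat_add_iff N).mpr hd) fun n => ?_
  simpa only [add_right_comm n 1 N] using hN (n + N) (Nat.le_add_left N n)

lemma norm_add_smul_sub_sq_le_of_subgradient {H : Type*} [NormedAddCommGroup H]
    [InnerProductSpace ℝ H] {f : H → ℝ} {x w y : H} {t : ℝ} (ht : 0 ≤ t)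
    (hsub : f y ≥ f x + ⟪-w, y - x⟫) :
    ‖x + t • w - y‖ ^ 2 ≤ ‖x - y‖ ^ 2 - 2 * t * (f x - f y) + ‖t • w‖ ^ 2 := by
  have hw : ⟪w, x - y⟫ ≤ f y - f x := by
    rw [inner_neg_left] at hsub
    rw [← neg_sub y x, inner_neg_right]
    linarith
  calc ‖x + t • w - y‖ ^ 2 = ‖x - y‖ ^ 2 + 2 * t * ⟪w, x - y⟫ + ‖t • w‖ ^ 2 := by
        rw [show x + t • w - y = (x - y) + t • w by abel, norm_add_sq_real,
          real_inner_smul_right, real_inner_comm]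
        ring
    _ ≤ _ := by nlinarith

theorem stmt12_general {H : Type*} [NormedAddCommGroup H] [InnerProductSpace ℝ H]
    (f : H → ℝ) (lam : ℕ → ℝ) (hlam : ∀ n, 0 < lam n)
    (hdiv : ¬ Summable lam)
    (z w : ℕ → H)
    (hrec : ∀ n, z (n + 1) = z n + lam n • w n)
    (hsub : ∀ (n : ℕ) (y : H), f y ≥ f (z n) + ⟪-(w n), y - z n⟫)
    (hcond : (Summable fun n => ‖z (n + 1) - z n‖ ^ 2) ∨
      Tendsto (fun n => lam n * ‖w n‖ ^ 2) atTop (𝓝 0)) :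
    ∀ y : H, Filter.liminf (fun n => (f (z n) : EReal)) atTop ≤ (f y : EReal) := by
  intro y
  by_contra! hlt
  obtain ⟨r, hyr, hr⟩ := EReal.exists_between_coe_real hlt
  have hε : 0 < r - f y := sub_pos.mpr (mod_cast hyr)
  have hincr n : z (n + 1) - z n = lam n • w n := by rw [hrec n, add_sub_cancel_left]
  have hdescent : ∀ᶠ n in atTop,
      2 * (r - f y) * lam n ≤ ‖z n - y‖ ^ 2 - ‖z (n + 1) - y‖ ^ 2 + ‖z (n + 1) - z n‖ ^ 2 := by
    filter_upwards [eventually_lt_of_lt_liminf hr] with n hn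
    have hrz : r < f (z n) := mod_cast hn
    have hstep := norm_add_smul_sub_sq_le_of_subgradient (hlam n).le (hsub n y)
    rw [← hrec n, ← hincr n] at hstep
    nlinarith [hlam n]
  apply hdiv
  rcases hcond with hsum | hsmall
  · refine (summable_mul_left_iff (by positivity : 2 * (r - f y) ≠ 0)).mp ?_
    exact summable_of_eventually_le_sub_succ_add (fun n => sq_nonneg _)
      (fun n => by have := hlam n; positivity) (fun n => sq_nonneg _) hsum hdescent
  · have hsmall' : ∀ᶠ n in atTop, ‖z (n + 1) - z n‖ ^ 2 ≤ (r - f y) * lam n := by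
      filter_upwards [hsmall.eventually_lt_const hε] with n hn
      rw [hincr n, norm_smul, Real.norm_of_nonneg (hlam n).le, mul_pow, sq, mul_assoc]
      nlinarith [hlam n]
    refine (summable_mul_left_iff hε.ne').mp ?_
    refine summable_of_eventually_le_sub_succ_add (a := fun n => ‖z n - y‖ ^ 2) (d := 0)
      (fun n => sq_nonneg _)
      (fun n => by have := hlam n; positivity) (fun _ => le_rfl) summable_zero ?_
    filter_upwards [hdescent, hsmall'] with n h1 h2
    simp only [Pi.zero_apply, add_zero]
    linarith

/-- for an explicit (Euler) subgradient sequence `z_{n+1} = z_n + λ_n w_n`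
with `−w_n ∈ ∂f(z_n)` and `Σ λ_n = ∞`, if either `Σ ‖z_{n+1} − z_n‖² < ∞` or
`λ_n ‖w_n‖² → 0`, then `liminf f(z_n) ≤ f(y)` for every `y`, i.e. `liminf f(z_n) = inf f`. -/
theorem stmt12 {H : Type*} [NormedAddCommGroup H] [InnerProductSpace ℝ H] [CompleteSpace H]
    (f : H → ℝ) (lam : ℕ → ℝ) (hlam : ∀ n, 0 < lam n)
    (hdiv : ¬ Summable lam)
    (z w : ℕ → H)
    (hrec : ∀ n, z (n + 1) = z n + lam n • w n)
    (hsub : ∀ (n : ℕ) (y : H), f y ≥ f (z n) + ⟪-(w n), y - z n⟫)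
    (hcond : (Summable fun n => ‖z (n + 1) - z n‖ ^ 2) ∨
      Tendsto (fun n => lam n * ‖w n‖ ^ 2) atTop (𝓝 0)) :
    ∀ y : H, Filter.liminf (fun n => (f (z n) : EReal)) atTop ≤ (f y : EReal) :=
  stmt12_general f lam hlam hdiv z w hrec hsub hcond
end

section
/- (Opial's lemma) Let H be a real Hilbert space, F ⊆ H nonempty, and (x_n) a sequence in H such that (1) for every u ∈ F the limit of ‖x_n − u‖ as n → ∞ exists, and (2) every weak cluster point of (x_n) belongs to F. Then (x_n) converges weakly to some x* ∈ F. -/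
/-!
Since `‖x n - u‖` converges for some `u`, the sequence is bounded, so it has weak cluster points:
sequential Banach–Alaoglu applies on the closed span of the sequence, which is separable, and
Riesz representation turns the limit functional into a vector. If `p` and `q` are weak cluster
points, then `2 ⟪x n, p - q⟫ = ‖x n - q‖² - ‖x n - p‖² + ‖p‖² - ‖q‖²` converges, and its limit
computed along the two subsequences gives `⟪p, p - q⟫ = ⟪q, p - q⟫`, i.e. `p = q`. A bounded
sequence with a unique weak cluster point converges weakly to it.
-/

open RealInnerProductSpace Filter Topology

/-- `p` is a weak cluster point of the sequence `x`. -/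
def WeakClusterPt {H : Type*} [NormedAddCommGroup H] [InnerProductSpace ℝ H]
    (x : ℕ → H) (p : H) : Prop :=
  ∃ φ : ℕ → ℕ, StrictMono φ ∧
    ∀ y : H, Tendsto (fun n => ⟪x (φ n), y⟫) atTop (𝓝 ⟪p, y⟫)

theorem exists_norm_le_of_tendsto_norm_sub {E : Type*} [SeminormedAddGroup E] {x : ℕ → E} {u : E}
    {l : ℝ} (hl : Tendsto (fun n => ‖x n - u‖) atTop (𝓝 l)) : ∃ M, ∀ n, ‖x n‖ ≤ M := by
  obtain ⟨C, hC⟩ := hl.bddAbove_range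
  exact ⟨‖u‖ + C, fun n => (norm_le_insert' (x n) u).trans (by gcongr; exact hC ⟨n, rfl⟩)⟩

section WeakClusterPoints

variable {H : Type*} [NormedAddCommGroup H] [InnerProductSpace ℝ H]

theorem exists_weakClusterPt_of_norm_le_of_separableSpace [CompleteSpace H]
    [TopologicalSpace.SeparableSpace H] {x : ℕ → H} {M : ℝ} (hM : ∀ n, ‖x n‖ ≤ M) :
    ∃ p, WeakClusterPt x p := by
  obtain ⟨f, -, φ, hφ, hf⟩ := WeakDual.isSeqCompact_closedBall ℝ H 0 M
    (x := fun n => (InnerProductSpace.toDual ℝ H (x n)).toWeakDual) fun n => by simpa using hM n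
  refine ⟨(InnerProductSpace.toDual ℝ H).symm f.toStrongDual, φ, hφ, fun y => ?_⟩
  rw [InnerProductSpace.toDual_symm_apply]
  exact ((WeakDual.eval_continuous y).tendsto f).comp hf

theorem WeakClusterPt.of_submodule {K : Submodule ℝ H} [K.HasOrthogonalProjection] {x : ℕ → K}
    {p : K} (hp : WeakClusterPt x p) : WeakClusterPt (fun n => (x n : H)) p := by
  obtain ⟨φ, hφ, hlim⟩ := hp
  refine ⟨φ, hφ, fun y => ?_⟩
  simpa using hlim (K.orthogonalProjectionOnto y)

theorem exists_weakClusterPt_of_norm_le [CompleteSpace H] {x : ℕ → H} {M : ℝ}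
    (hM : ∀ n, ‖x n‖ ≤ M) : ∃ p, WeakClusterPt x p := by
  set K := (Submodule.span ℝ (Set.range x)).topologicalClosure
  have hxK (n : ℕ) : x n ∈ K := Submodule.le_topologicalClosure _ (Submodule.subset_span ⟨n, rfl⟩)
  have : TopologicalSpace.SeparableSpace K := by
    have := (Set.countable_range x).isSeparable.span (R := ℝ) |>.closure
    rw [← Submodule.topologicalClosure_coe] at this
    exact this.separableSpace
  obtain ⟨p, hp⟩ := exists_weakClusterPt_of_norm_le_of_separableSpace
    (x := fun n => (⟨x n, hxK n⟩ : K)) hM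
  exact ⟨p, hp.of_submodule⟩

theorem exists_tendsto_inner_sub_of_tendsto_norm_sub {x : ℕ → H} {p q : H}
    (hp : ∃ a, Tendsto (fun n => ‖x n - p‖) atTop (𝓝 a))
    (hq : ∃ b, Tendsto (fun n => ‖x n - q‖) atTop (𝓝 b)) :
    ∃ l, Tendsto (fun n => ⟪x n, p - q⟫) atTop (𝓝 l) := by
  obtain ⟨a, ha⟩ := hp
  obtain ⟨b, hb⟩ := hq
  have polarization (v : H) :
      ⟪v, p - q⟫ = (‖v - q‖ ^ 2 - ‖v - p‖ ^ 2 + ‖p‖ ^ 2 - ‖q‖ ^ 2) / 2 := by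
    rw [norm_sub_sq_real, norm_sub_sq_real, inner_sub_right]
    ring
  simp only [polarization]
  exact ⟨_, ((((hb.pow 2).sub (ha.pow 2)).add_const _).sub_const _).div_const 2⟩

namespace WeakClusterPt

variable {x : ℕ → H} {p q : H}

theorem of_comp {ψ : ℕ → ℕ} (hψ : Tendsto ψ atTop atTop) (hp : WeakClusterPt (x ∘ ψ) p) :
    WeakClusterPt x p := by
  obtain ⟨φ, hφ, hlim⟩ := hp
  obtain ⟨χ, hχ, hmono⟩ := strictMono_subseq_of_tendsto_atTop (hψ.comp hφ.tendsto_atTop)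
  exact ⟨ψ ∘ φ ∘ χ, hmono, fun y => (hlim y).comp hχ.tendsto_atTop⟩

theorem inner_eq_of_tendsto (hp : WeakClusterPt x p) {y : H} {l : ℝ}
    (h : Tendsto (fun n => ⟪x n, y⟫) atTop (𝓝 l)) : ⟪p, y⟫ = l :=
  let ⟨_, hφ, hlim⟩ := hp
  tendsto_nhds_unique (hlim y) (h.comp hφ.tendsto_atTop)

theorem eq_of_tendsto_norm_sub (hp : WeakClusterPt x p) (hq : WeakClusterPt x q)
    (hp' : ∃ a, Tendsto (fun n => ‖x n - p‖) atTop (𝓝 a))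
    (hq' : ∃ b, Tendsto (fun n => ‖x n - q‖) atTop (𝓝 b)) : p = q := by
  obtain ⟨l, hl⟩ := exists_tendsto_inner_sub_of_tendsto_norm_sub hp' hq'
  have : ⟪p - q, p - q⟫ = 0 := by
    rw [inner_sub_left, hp.inner_eq_of_tendsto hl, hq.inner_eq_of_tendsto hl, sub_self]
  exact sub_eq_zero.mp (inner_self_eq_zero.mp this)

end WeakClusterPt

theorem tendsto_inner_of_forall_weakClusterPt_eq [CompleteSpace H] {x : ℕ → H} {M : ℝ}
    (hM : ∀ n, ‖x n‖ ≤ M) {p : H} (h : ∀ q, WeakClusterPt x q → q = p) (y : H) :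
    Tendsto (fun n => ⟪x n, y⟫) atTop (𝓝 ⟪p, y⟫) := by
  refine tendsto_of_subseq_tendsto fun ψ hψ => ?_
  obtain ⟨q, hq⟩ := exists_weakClusterPt_of_norm_le (x := x ∘ ψ) fun n => hM (ψ n)
  obtain rfl := h q (hq.of_comp hψ)
  obtain ⟨φ, -, hφ⟩ := hq
  exact ⟨φ, hφ y⟩

end WeakClusterPoints

/-- Opial's lemma: if `‖x_n − u‖` converges for every `u ∈ F` and every
weak cluster point of `(x_n)` lies in `F`, then `(x_n)` converges weakly to a point of `F`. -/
theorem stmt13 {H : Type*} [NormedAddCommGroup H] [InnerProductSpace ℝ H] [CompleteSpace H]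
    (F : Set H) (hF : F.Nonempty) (x : ℕ → H)
    (h1 : ∀ u ∈ F, ∃ l : ℝ, Tendsto (fun n => ‖x n - u‖) atTop (𝓝 l))
    (h2 : ∀ p : H, WeakClusterPt x p → p ∈ F) :
    ∃ xstar ∈ F, ∀ y : H, Tendsto (fun n => ⟪x n, y⟫) atTop (𝓝 ⟪xstar, y⟫) := by
  obtain ⟨u, hu⟩ := hF
  obtain ⟨l, hl⟩ := h1 u hu
  obtain ⟨M, hM⟩ := exists_norm_le_of_tendsto_norm_sub hl
  obtain ⟨p, hp⟩ := exists_weakClusterPt_of_norm_le hM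
  have hpF : p ∈ F := h2 p hp
  refine ⟨p, hpF, tendsto_inner_of_forall_weakClusterPt_eq hM fun q hq => ?_⟩
  exact hq.eq_of_tendsto_norm_sub hp (h1 q (h2 q hq)) (h1 p hpF)
end

section
/- (Passty) Let H be a real Hilbert space, (x_n)_{n≥1} a sequence in H, λ_n > 0 stepsizes with σ_n = λ_1 + ⋯ + λ_n → ∞, and let x̄_n = (1/σ_n) Σ_{k=1}^n λ_k x_k be the weighted averages. Let F ⊆ H and assume that for every u ∈ F the limit of ‖x_n − u‖ as n → ∞ exists. Then the set of weak cluster points of (x_n) lying in F contains at most one point, and the set of weak cluster points of (x̄_n) lying in F contains at most one point. In particular, if every weak cluster point of (x_n) (resp. of (x̄_n)) lies in F and the sequence is bounded, then (x_n) (resp. (x̄_n)) converges weakly. -/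
open RealInnerProductSpace Filter Topology Finset

/-- The sequence `x` converges weakly to `p`. -/
def WeakConv {H : Type*} [NormedAddCommGroup H] [InnerProductSpace ℝ H]
    (x : ℕ → H) (p : H) : Prop :=
  ∀ y : H, Tendsto (fun n => ⟪x n, y⟫) atTop (𝓝 ⟪p, y⟫)

/-!
The squared distances `‖x n - p‖²` and `‖x n - q‖²` differ by `2 ⟪x n, q - p⟫` plus a constant,
so for `p, q ∈ F` the scalars `⟪x n, p - q⟫` converge; by the weighted Cesàro lemma so do
`⟪x̄ n, p - q⟫`. Two weak cluster points `p, q ∈ F` of the same sequence then have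
`⟪p, p - q⟫ = ⟪q, p - q⟫`, i.e. `p = q`. For the weak convergence statements, a bounded sequence
has weak cluster points (sequential Banach–Alaoglu in the separable closed span of the sequence),
and if it has only one, every subsequence has a further subsequence converging weakly to it.
-/

open Asymptotics in
theorem Filter.Tendsto.weighted_cesaro_smul {E : Type*} [NormedAddCommGroup E] [NormedSpace ℝ E]
    {w : ℕ → ℝ} {u : ℕ → E} {l : E} (h : Tendsto u atTop (𝓝 l)) (hw : 0 ≤ w)
    (hσ : Tendsto (fun n => ∑ i ∈ range n, w i) atTop atTop) :
    Tendsto (fun n => (∑ i ∈ range n, w i)⁻¹ • ∑ i ∈ range n, w i • u i) atTop (𝓝 l) := by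
  set σ := fun n => ∑ i ∈ range n, w i
  have hdev : (fun n => ∑ i ∈ range n, w i • (u i - l)) =o[atTop] σ := by
    refine IsLittleO.sum_range ?_ hw hσ
    simpa using (isBigO_refl w atTop).smul_isLittleO
      ((isLittleO_one_iff ℝ).2 (tendsto_sub_nhds_zero_iff.2 h))
  have hσ0 : ∀ᶠ n in atTop, σ n ≠ 0 := (hσ.eventually_gt_atTop 0).mono fun _ h => h.ne'
  rw [← tendsto_sub_nhds_zero_iff, ← isLittleO_one_iff ℝ]
  refine ((isBigO_refl (fun n => (σ n)⁻¹) atTop).smul_isLittleO hdev).congr' ?_ ?_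
  · filter_upwards [hσ0] with n hn
    simp only [σ] at hn ⊢
    simp only [smul_sub, sum_sub_distrib, ← sum_smul, smul_smul, inv_mul_cancel₀ hn, one_smul]
  · filter_upwards [hσ0] with n hn
    exact inv_mul_cancel₀ hn

section

variable {H : Type*} [NormedAddCommGroup H] [InnerProductSpace ℝ H]

theorem tendsto_inner_sub_of_tendsto_norm_sub {x : ℕ → H} {p q : H} {a b : ℝ}
    (ha : Tendsto (fun n => ‖x n - p‖) atTop (𝓝 a))
    (hb : Tendsto (fun n => ‖x n - q‖) atTop (𝓝 b)) :
    Tendsto (fun n => ⟪x n, p - q⟫) atTop (𝓝 ((‖p‖ ^ 2 - ‖q‖ ^ 2 - (a ^ 2 - b ^ 2)) / 2)) := by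
  refine ((tendsto_const_nhds.sub ((ha.pow 2).sub (hb.pow 2))).div_const 2).congr fun n => ?_
  rw [norm_sub_sq_real, norm_sub_sq_real, inner_sub_right]
  ring

theorem Filter.Tendsto.inner_weighted_average {x : ℕ → H} {y : H} {L : ℝ}
    (h : Tendsto (fun n => ⟪x n, y⟫) atTop (𝓝 L)) {w : ℕ → ℝ} (hw : 0 ≤ w)
    (hσ : Tendsto (fun n => ∑ i ∈ range n, w i) atTop atTop) :
    Tendsto (fun n => ⟪(∑ i ∈ range n, w i)⁻¹ • ∑ i ∈ range n, w i • x i, y⟫) atTop (𝓝 L) := by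
  refine (h.weighted_cesaro_smul hw hσ).congr fun n => ?_
  simp only [real_inner_smul_left, sum_inner, smul_eq_mul]

theorem WeakClusterPt.inner_eq_of_tendsto_s14 {x : ℕ → H} {p y : H} {L : ℝ}
    (hp : WeakClusterPt x p) (hL : Tendsto (fun n => ⟪x n, y⟫) atTop (𝓝 L)) : ⟪p, y⟫ = L := by
  obtain ⟨φ, hφ, hlim⟩ := hp
  exact tendsto_nhds_unique (hlim y) (hL.comp hφ.tendsto_atTop)

theorem subsingleton_weakClusterPt_mem_of_tendsto_inner {x : ℕ → H} {F : Set H}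
    (h : ∀ p ∈ F, ∀ q ∈ F, ∃ L : ℝ, Tendsto (fun n => ⟪x n, p - q⟫) atTop (𝓝 L)) :
    {p | WeakClusterPt x p ∧ p ∈ F}.Subsingleton := by
  rintro p ⟨hp, hpF⟩ q ⟨hq, hqF⟩
  obtain ⟨L, hL⟩ := h p hpF q hqF
  have : ⟪p - q, p - q⟫ = 0 := by
    rw [inner_sub_left, hp.inner_eq_of_tendsto_s14 hL, hq.inner_eq_of_tendsto_s14 hL, sub_self]
  exact sub_eq_zero.1 (inner_self_eq_zero.1 this)

theorem exists_weakClusterPt_of_separableSpace [CompleteSpace H]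
    [TopologicalSpace.SeparableSpace H] {x : ℕ → H} {M : ℝ} (hM : ∀ n, ‖x n‖ ≤ M) :
    ∃ p : H, WeakClusterPt x p := by
  let v : ℕ → WeakDual ℝ H := fun n => (InnerProductSpace.toDual ℝ H (x n)).toWeakDual
  have hv : ∀ n, v n ∈ WeakDual.toStrongDual ⁻¹' Metric.closedBall 0 M := fun n => by
    simpa [v] using hM n
  obtain ⟨f, -, φ, hφ, hlim⟩ := WeakDual.isSeqCompact_closedBall ℝ H 0 M hv
  refine ⟨(InnerProductSpace.toDual ℝ H).symm f.toStrongDual, φ, hφ, fun y => ?_⟩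
  rw [InnerProductSpace.toDual_symm_apply]
  exact ((WeakDual.eval_continuous y).tendsto f).comp hlim

theorem WeakClusterPt.coe_submodule {K : Submodule ℝ H} [K.HasOrthogonalProjection]
    {ξ : ℕ → K} {q : K} (h : WeakClusterPt ξ q) : WeakClusterPt (fun n => (ξ n : H)) q := by
  obtain ⟨φ, hφ, hlim⟩ := h
  refine ⟨φ, hφ, fun y => ?_⟩
  simpa using hlim (K.orthogonalProjectionOnto y)

theorem exists_weakClusterPt_of_bounded [CompleteSpace H] {x : ℕ → H} {M : ℝ}
    (hM : ∀ n, ‖x n‖ ≤ M) : ∃ p : H, WeakClusterPt x p := by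
  let K := (Submodule.span ℝ (Set.range x)).topologicalClosure
  have hxK : ∀ n, x n ∈ K := fun n =>
    Submodule.le_topologicalClosure _ (Submodule.subset_span ⟨n, rfl⟩)
  have : CompleteSpace K :=
    (Submodule.span ℝ (Set.range x)).isClosed_topologicalClosure.completeSpace_coe
  have : TopologicalSpace.SeparableSpace K := by
    have : TopologicalSpace.IsSeparable (K : Set H) := by
      rw [Submodule.topologicalClosure_coe]
      exact (Set.countable_range x).isSeparable.span.closure
    exact this.separableSpace
  obtain ⟨q, hq⟩ := exists_weakClusterPt_of_separableSpace (x := fun n => (⟨x n, hxK n⟩ : K)) hM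
  exact ⟨q, hq.coe_submodule⟩

theorem WeakClusterPt.of_comp_s14 {x : ℕ → H} {ψ : ℕ → ℕ} (hψ : StrictMono ψ) {p : H}
    (h : WeakClusterPt (x ∘ ψ) p) : WeakClusterPt x p := by
  obtain ⟨φ, hφ, hlim⟩ := h
  exact ⟨ψ ∘ φ, hψ.comp hφ, hlim⟩

theorem weakConv_of_bounded_of_forall_weakClusterPt_eq [CompleteSpace H] {x : ℕ → H} {M : ℝ}
    (hM : ∀ n, ‖x n‖ ≤ M) {p : H} (hp : ∀ q, WeakClusterPt x q → q = p) : WeakConv x p := by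
  intro y
  refine tendsto_of_subseq_tendsto fun ns hns => ?_
  obtain ⟨φ, -, hφ⟩ := strictMono_subseq_of_tendsto_atTop hns
  obtain ⟨q, ψ, hψ, hlim⟩ := exists_weakClusterPt_of_bounded fun n => hM (ns (φ n))
  have hqp : q = p := hp q (WeakClusterPt.of_comp_s14 hφ ⟨ψ, hψ, hlim⟩)
  exact ⟨φ ∘ ψ, hqp ▸ hlim y⟩

theorem exists_weakConv_of_bounded_of_subsingleton [CompleteSpace H] {x : ℕ → H} {M : ℝ}
    (hM : ∀ n, ‖x n‖ ≤ M) (huniq : {p | WeakClusterPt x p}.Subsingleton) :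
    ∃ p, WeakConv x p := by
  obtain ⟨p, hp⟩ := exists_weakClusterPt_of_bounded hM
  exact ⟨p, weakConv_of_bounded_of_forall_weakClusterPt_eq hM fun q hq => huniq hq hp⟩

end

/-- Passty: if `‖x_n − u‖` converges for every `u ∈ F`, then the weak cluster
points of `(x_n)` lying in `F` form at most a singleton, and likewise for the weighted
averages `x̄_n`; in particular, boundedness together with all weak cluster points lying in
`F` yields weak convergence of `(x_n)` (resp. of `(x̄_n)`). -/
theorem stmt14 {H : Type*} [NormedAddCommGroup H] [InnerProductSpace ℝ H] [CompleteSpace H]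
    (F : Set H) (x : ℕ → H) (lam : ℕ → ℝ) (hlam : ∀ n : ℕ, 0 < lam (n + 1))
    (hσ : Tendsto (fun n => ∑ i ∈ range n, lam (i + 1)) atTop atTop)
    (xbar : ℕ → H)
    (hxbar : ∀ n : ℕ, xbar n =
      (∑ i ∈ range n, lam (i + 1))⁻¹ • ∑ i ∈ range n, lam (i + 1) • x (i + 1))
    (h1 : ∀ u ∈ F, ∃ l : ℝ, Tendsto (fun n => ‖x n - u‖) atTop (𝓝 l)) :
    {p : H | WeakClusterPt x p ∧ p ∈ F}.Subsingleton ∧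
    {p : H | WeakClusterPt xbar p ∧ p ∈ F}.Subsingleton ∧
    ((∃ M : ℝ, ∀ n, ‖x n‖ ≤ M) → (∀ p : H, WeakClusterPt x p → p ∈ F) →
      ∃ xstar : H, WeakConv x xstar) ∧
    ((∃ M : ℝ, ∀ n, ‖xbar n‖ ≤ M) → (∀ p : H, WeakClusterPt xbar p → p ∈ F) →
      ∃ xstar : H, WeakConv xbar xstar) := by
  have hx_inner : ∀ p ∈ F, ∀ q ∈ F, ∃ L : ℝ, Tendsto (fun n => ⟪x n, p - q⟫) atTop (𝓝 L) := by
    intro p hp q hq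
    obtain ⟨a, ha⟩ := h1 p hp
    obtain ⟨b, hb⟩ := h1 q hq
    exact ⟨_, tendsto_inner_sub_of_tendsto_norm_sub ha hb⟩
  have hxbar_inner : ∀ p ∈ F, ∀ q ∈ F, ∃ L : ℝ, Tendsto (fun n => ⟪xbar n, p - q⟫) atTop (𝓝 L) := by
    intro p hp q hq
    obtain ⟨L, hL⟩ := hx_inner p hp q hq
    refine ⟨L, ?_⟩
    rw [funext hxbar]
    exact (hL.comp (tendsto_add_atTop_nat 1)).inner_weighted_average (fun i => (hlam i).le) hσ
  have hF := subsingleton_weakClusterPt_mem_of_tendsto_inner hx_inner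
  have hFbar := subsingleton_weakClusterPt_mem_of_tendsto_inner hxbar_inner
  refine ⟨hF, hFbar, ?_, ?_⟩ <;> rintro ⟨M, hM⟩ hall
  · exact exists_weakConv_of_bounded_of_subsingleton hM (hF.anti fun p hp => ⟨hp, hall p hp⟩)
  · exact exists_weakConv_of_bounded_of_subsingleton hM (hFbar.anti fun p hp => ⟨hp, hall p hp⟩)
end

section
/- Let A be a maximal monotone operator on a real Hilbert space H whose solution set S = {x : (x, 0) ∈ A} is nonempty (S is closed and convex). Let u : [0, ∞) → H be a solution of the differential inclusion u̇ ∈ −Au, and let v : [0, ∞) → H satisfy, for every t ≥ 0, v(t) ∈ S and ‖u(t) − v(t)‖ ≤ ‖u(t) − w‖ for all w ∈ S (i.e., v(t) is the nearest-point projection of u(t) onto S). Then v(t) converges strongly to some point of S as t → ∞. -/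
/-! Monotonicity of `A` makes `t ↦ ‖u t - z‖` nonincreasing for every zero `z` of `A`: its square
is absolutely continuous with a.e. derivative `2⟪u - z, u̇⟫ ≤ 0`. By maximality the zero set `S`
is an intersection of closed half-spaces, hence closed and convex, so the projection inequality
gives `‖v t - v s‖² ≤ d(u s, S)² - d(u t, S)²` for `s ≤ t`. As `d(u t, S)` is nonincreasing, `v`
is Cauchy, and its limit lies in the closed set `S`. -/

open RealInnerProductSpace Filter Topology MeasureTheory Set

theorem AbsolutelyContinuousOnInterval.le_of_ae_deriv_nonpos {f : ℝ → ℝ} {a b : ℝ}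
    (hab : a ≤ b) (hf : AbsolutelyContinuousOnInterval f a b)
    (hf' : ∀ᵐ t, t ∈ Ioo a b → deriv f t ≤ 0) : f b ≤ f a := by
  rw [← sub_nonpos, ← hf.integral_deriv_eq_sub, ← neg_nonneg, ← intervalIntegral.integral_neg]
  refine intervalIntegral.integral_nonneg_of_ae_restrict hab ?_
  rw [EventuallyLE, Measure.restrict_congr_set Ioo_ae_eq_Icc.symm,
    ae_restrict_iff' measurableSet_Ioo]
  filter_upwards [hf'] with t ht hmem
  simpa using ht hmem

theorem AntitoneOn.cauchySeq_of_bddBelow {ψ : ℝ → ℝ} {a : ℝ} (hψ : AntitoneOn ψ (Ici a))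
    (hbdd : BddBelow (ψ '' Ici a)) : CauchySeq ψ := by
  have hanti : Antitone fun t ↦ ψ (max t a) := fun s t hst ↦
    hψ (le_max_right s a) (le_max_right t a) (max_le_max_right a hst)
  have hbdd' : BddBelow (range fun t ↦ ψ (max t a)) :=
    hbdd.mono (range_subset_iff.2 fun t ↦ mem_image_of_mem ψ (le_max_right t a))
  refine ((tendsto_atTop_ciInf hanti hbdd').congr' ?_).cauchySeq
  filter_upwards [eventually_ge_atTop a] with t ht
  rw [max_eq_left ht]

theorem cauchySeq_of_sq_dist_le_sub {X : Type*} [PseudoMetricSpace X] {v : ℝ → X} {ψ : ℝ → ℝ}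
    {a : ℝ} (hbdd : BddBelow (ψ '' Ici a))
    (h : ∀ s t, a ≤ s → s ≤ t → dist (v s) (v t) ^ 2 ≤ ψ s - ψ t) : CauchySeq v := by
  have hψ : AntitoneOn ψ (Ici a) := fun s hs t _ hst ↦
    sub_nonneg.1 ((sq_nonneg _).trans (h s t hs hst))
  have hsq : ∀ s t, a ≤ s → a ≤ t → dist (v s) (v t) ^ 2 ≤ dist (ψ s) (ψ t) := by
    intro s t hs ht
    rcases le_total s t with hst | hts
    · exact (h s t hs hst).trans (le_abs_self _)
    · rw [dist_comm, dist_comm (ψ s)]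
      exact (h t s ht hts).trans (le_abs_self _)
  rw [cauchySeq_iff_tendsto_dist_atTop_0]
  have hψ' := cauchySeq_iff_tendsto_dist_atTop_0.1 (hψ.cauchySeq_of_bddBelow hbdd)
  refine squeeze_zero' (Eventually.of_forall fun _ ↦ dist_nonneg) ?_
    (by simpa using hψ'.sqrt)
  filter_upwards [eventually_ge_atTop (a, a)] with p hp
  exact (Real.le_sqrt dist_nonneg dist_nonneg).2 (hsq _ _ hp.1 hp.2)

theorem Convex.sq_norm_sub_add_sq_norm_sub_le {H : Type*} [NormedAddCommGroup H]
    [InnerProductSpace ℝ H] {K : Set H} (hK : Convex ℝ K) {x y w : H} (hy : y ∈ K) (hw : w ∈ K)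
    (hmin : ∀ z ∈ K, ‖x - y‖ ≤ ‖x - z‖) : ‖x - y‖ ^ 2 + ‖y - w‖ ^ 2 ≤ ‖x - w‖ ^ 2 := by
  have : Nonempty K := ⟨⟨y, hy⟩⟩
  have hbdd : BddBelow (range fun z : K ↦ ‖x - z‖) := ⟨0, forall_mem_range.2 fun _ ↦ norm_nonneg _⟩
  have hinf : ‖x - y‖ = ⨅ z : K, ‖x - z‖ :=
    le_antisymm (le_ciInf fun z ↦ hmin z z.2) (ciInf_le hbdd ⟨y, hy⟩)
  have hinner := (norm_eq_iInf_iff_real_inner_le_zero hK hy).1 hinf w hw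
  have : x - w = (x - y) - (w - y) := by abel
  rw [this, norm_sub_sq_real (x - y), norm_sub_rev y w]
  linarith

section Operator

variable {H : Type*} [NormedAddCommGroup H] [InnerProductSpace ℝ H] {A : Set (H × H)}

theorem MaximalMonotone.mem_iff (hA : MaximalMonotone A) {x y : H} :
    (x, y) ∈ A ↔ ∀ q ∈ A, 0 ≤ ⟪q.2 - y, q.1 - x⟫ := by
  refine ⟨fun hxy q hq ↦ hA.1 q hq _ hxy, fun h ↦ ?_⟩
  have hmono : MonotoneOp (insert (x, y) A) := by
    rintro p (rfl | hp) q (rfl | hq)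
    · simp
    · rw [← neg_sub q.2, ← neg_sub q.1, inner_neg_neg]
      exact h q hq
    · exact h p hp
    · exact hA.1 p hp q hq
  rw [← hA.2 _ hmono (subset_insert _ _)]
  exact mem_insert _ _

theorem MaximalMonotone.setOf_zero_eq_biInter (hA : MaximalMonotone A) :
    {z : H | (z, 0) ∈ A} = ⋂ q ∈ A, {x | ⟪q.2, x⟫ ≤ ⟪q.2, q.1⟫} := by
  ext x
  rw [mem_iInter₂]
  exact hA.mem_iff.trans (forall₂_congr fun q _ ↦ by rw [sub_zero, inner_sub_right, sub_nonneg]; rfl)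

theorem MaximalMonotone.isClosed_setOf_zero (hA : MaximalMonotone A) :
    IsClosed {z : H | (z, 0) ∈ A} := by
  rw [hA.setOf_zero_eq_biInter]
  exact isClosed_biInter fun q _ ↦ isClosed_le (continuous_const.inner continuous_id)
    continuous_const

theorem MaximalMonotone.convex_setOf_zero (hA : MaximalMonotone A) :
    Convex ℝ {z : H | (z, 0) ∈ A} := by
  rw [hA.setOf_zero_eq_biInter]
  exact convex_iInter₂ fun q _ ↦ convex_halfSpace_le (innerₛₗ ℝ q.2).isLinear _

theorem MonotoneOp.antitoneOn_norm_sub {a : ℝ} (hA : MonotoneOp A) {u : ℝ → H}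
    (hulip : LocallyLipschitzOn (Ici a) u)
    (hu : ∀ᵐ t ∂(volume.restrict (Ioi a)), ∃ d : H, HasDerivAt u d t ∧ (u t, -d) ∈ A)
    {z : H} (hz : (z, 0) ∈ A) : AntitoneOn (fun t ↦ ‖u t - z‖) (Ici a) := by
  intro s hs t _ hst
  have hsub : uIcc s t ⊆ Ici a := by
    rw [uIcc_of_le hst]
    exact (Icc_subset_Ici_iff hst).2 hs
  obtain ⟨K, hK⟩ := (hulip.mono hsub).exists_lipschitzOnWith_of_compact isCompact_uIcc
  have hac : AbsolutelyContinuousOnInterval (fun τ ↦ ‖u τ - z‖ ^ 2) s t := by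
    have := ((LipschitzWith.dist_left z).comp_lipschitzOnWith hK).absolutelyContinuousOnInterval
    simpa only [sq, Function.comp_def, dist_eq_norm] using this.fun_mul this
  have hderiv : ∀ᵐ τ, τ ∈ Ioo s t → deriv (fun τ ↦ ‖u τ - z‖ ^ 2) τ ≤ 0 := by
    filter_upwards [(ae_restrict_iff' measurableSet_Ioi).1 hu] with τ hτ hmem
    obtain ⟨d, hd, hdA⟩ := hτ (lt_of_le_of_lt hs hmem.1)
    have hmono : 0 ≤ ⟪-d - 0, u τ - z⟫ := hA _ hdA _ hz
    rw [sub_zero, inner_neg_left, real_inner_comm] at hmono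
    rw [(hd.sub_const z).norm_sq.deriv]
    linarith
  exact (pow_le_pow_iff_left₀ (norm_nonneg _) (norm_nonneg _) two_ne_zero).1
    (hac.le_of_ae_deriv_nonpos hst hderiv)

end Operator

theorem stmt15_general {H : Type*} [NormedAddCommGroup H] [InnerProductSpace ℝ H] [CompleteSpace H]
    (A : Set (H × H)) (hmax : MaximalMonotone A)
    (u : ℝ → H) (hulip : LocallyLipschitzOn (Ici 0) u)
    (hu : ∀ᵐ t ∂(volume.restrict (Ioi (0:ℝ))),
      ∃ d : H, HasDerivAt u d t ∧ (u t, -d) ∈ A)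
    (v : ℝ → H)
    (hv : ∀ t : ℝ, 0 ≤ t → v t ∈ {z : H | (z, 0) ∈ A} ∧
      ∀ w ∈ {z : H | (z, 0) ∈ A}, ‖u t - v t‖ ≤ ‖u t - w‖) :
    ∃ p ∈ {z : H | (z, 0) ∈ A}, Tendsto v atTop (𝓝 p) := by
  have hdecay : ∀ s t, 0 ≤ s → s ≤ t →
      dist (v s) (v t) ^ 2 ≤ ‖u s - v s‖ ^ 2 - ‖u t - v t‖ ^ 2 := by
    intro s t hs hst
    have ht : 0 ≤ t := hs.trans hst
    have hproj := hmax.convex_setOf_zero.sq_norm_sub_add_sq_norm_sub_le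
      (hv t ht).1 (hv s hs).1 (hv t ht).2
    have hfejer := hmax.1.antitoneOn_norm_sub hulip hu (hv s hs).1 hs ht hst
    have := pow_le_pow_left₀ (norm_nonneg _) hfejer 2
    rw [dist_comm, dist_eq_norm]
    linarith
  have hbdd : BddBelow ((fun t ↦ ‖u t - v t‖ ^ 2) '' Ici 0) :=
    ⟨0, by rintro _ ⟨t, -, rfl⟩; positivity⟩
  obtain ⟨p, hp⟩ := cauchySeq_tendsto_of_complete (cauchySeq_of_sq_dist_le_sub hbdd hdecay)
  refine ⟨p, hmax.isClosed_setOf_zero.mem_of_tendsto hp ?_, hp⟩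
  filter_upwards [eventually_ge_atTop 0] with t ht using (hv t ht).1

/-- along a solution `u` of `u̇ ∈ −Au`, the nearest-point projections `v(t)`
of `u(t)` onto the solution set `S = {x | (x, 0) ∈ A}` converge strongly to a point of `S`
as `t → ∞`. -/
theorem stmt15 {H : Type*} [NormedAddCommGroup H] [InnerProductSpace ℝ H] [CompleteSpace H]
    (A : Set (H × H)) (hA : A.Nonempty) (hmax : MaximalMonotone A)
    (hS : {z : H | (z, 0) ∈ A}.Nonempty)
    (u : ℝ → H) (hulip : LocallyLipschitzOn (Ici 0) u)
    (hu : ∀ᵐ t ∂(volume.restrict (Ioi (0:ℝ))),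
      ∃ d : H, HasDerivAt u d t ∧ (u t, -d) ∈ A)
    (v : ℝ → H)
    (hv : ∀ t : ℝ, 0 ≤ t → v t ∈ {z : H | (z, 0) ∈ A} ∧
      ∀ w ∈ {z : H | (z, 0) ∈ A}, ‖u t - v t‖ ≤ ‖u t - w‖) :
    ∃ p ∈ {z : H | (z, 0) ∈ A}, Tendsto v atTop (𝓝 p) :=
  stmt15_general A hmax u hulip hu v hv
end

section
/- (Baillon–Brézis ergodic theorem, continuous time) Let A be a maximal monotone operator on a real Hilbert space H with nonempty solution set S = {x : (x, 0) ∈ A}, and let u : [0, ∞) → H be a solution of the differential inclusion u̇ ∈ −Au. Then the averages σ_t = (1/t) ∫₀ᵗ u(s) ds converge weakly, as t → ∞, to a point of S. -/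
/-!
For `(y, ys) ∈ A`, monotonicity gives `d/dt ½‖u - y‖² = ⟪u - y, u̇⟫ ≤ ⟪ys, y - u⟫` almost
everywhere, and `½‖u - y‖²` is absolutely continuous. Integrating over `[0, t]` and dividing by `t`
gives `⟪ys, σ t - y⟫ ≤ ‖u 0 - y‖² / (2t)` for the averages `σ`, so every weak cluster point `p` of
`σ` satisfies `⟪ys - 0, y - p⟫ ≥ 0` on `A` and, by maximality, lies in `S`. With `ys = 0` the same
estimate makes `‖u t - z‖` nonincreasing for `z ∈ S`; hence `σ` is bounded and, by polarization,
`⟪u t, p - q⟫` converges for `p, q ∈ S`, and so does its Cesàro mean `⟪σ t, p - q⟫`. Evaluating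
that limit at two weak cluster points `p, q` gives `‖p - q‖² = 0` (Opial's argument), and weak
compactness of bounded sets yields weak convergence.
-/

open RealInnerProductSpace Filter Topology MeasureTheory Set intervalIntegral

theorem AbsolutelyContinuousOnInterval.sub_le_integral_of_ae_deriv_le {f φ : ℝ → ℝ} {a b : ℝ}
    (hab : a ≤ b) (hf : AbsolutelyContinuousOnInterval f a b)
    (hφ : IntervalIntegrable φ volume a b) (hle : ∀ᵐ x, x ∈ Ioo a b → deriv f x ≤ φ x) :
    f b - f a ≤ ∫ x in a..b, φ x := by
  rw [← hf.integral_deriv_eq_sub]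
  refine integral_mono_ae_restrict hab hf.intervalIntegrable_deriv hφ ?_
  rw [← Measure.restrict_congr_set Ioo_ae_eq_Icc]
  exact (ae_restrict_iff' measurableSet_Ioo).2 hle

theorem MaximalMonotone.mem_of_forall_inner_nonneg {H : Type*} [NormedAddCommGroup H]
    [InnerProductSpace ℝ H] {A : Set (H × H)} (hA : MaximalMonotone A) {x x' : H}
    (h : ∀ q ∈ A, 0 ≤ ⟪q.2 - x', q.1 - x⟫) : (x, x') ∈ A := by
  have hmono : MonotoneOp (insert (x, x') A) := by
    rintro p (rfl | hp) q (rfl | hq)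
    · simp
    · rw [← neg_sub, ← neg_sub q.1, inner_neg_neg]
      exact h q hq
    · exact h p hp
    · exact hA.1 p hp q hq
  exact hA.2 _ hmono (subset_insert _ _) ▸ mem_insert _ _

section CesaroMean

variable {E : Type*} [NormedAddCommGroup E] [NormedSpace ℝ E]

noncomputable def cesaroMean (w : ℝ → E) (t : ℝ) : E :=
  t⁻¹ • ∫ s in 0..t, w s

theorem norm_cesaroMean_le {w : ℝ → E} {t M : ℝ} (ht : 0 < t) (hw : ∀ s ∈ Ioc 0 t, ‖w s‖ ≤ M) :
    ‖cesaroMean w t‖ ≤ M := by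
  rw [cesaroMean, norm_smul, norm_inv, Real.norm_of_nonneg ht.le, inv_mul_le_iff₀ ht]
  refine (norm_integral_le_of_norm_le_const fun s hs => hw s ?_).trans_eq ?_
  · rwa [uIoc_of_le ht.le] at hs
  · rw [sub_zero, abs_of_pos ht, mul_comm]

theorem tendsto_cesaroMean_of_tendsto [CompleteSpace E] {w : ℝ → E} {L : E}
    (hw : ∀ t, 0 ≤ t → IntervalIntegrable w volume 0 t) (h : Tendsto w atTop (𝓝 L)) :
    Tendsto (cesaroMean w) atTop (𝓝 L) := by
  rw [Metric.tendsto_nhds]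
  intro ε hε
  obtain ⟨T, hT0, hT⟩ : ∃ T, 0 ≤ T ∧ ∀ s ≥ T, ‖w s - L‖ < ε / 2 := by
    obtain ⟨T, hT⟩ := eventually_atTop.1 (Metric.tendsto_nhds.1 h (ε / 2) (half_pos hε))
    exact ⟨max T 0, le_max_right _ _, fun s hs => dist_eq_norm (w s) L ▸ hT s
      ((le_max_left _ _).trans hs)⟩
  set C := ‖∫ s in 0..T, (w s - L)‖
  have hC : ∀ᶠ t in atTop, C / t < ε / 2 :=
    (tendsto_const_nhds.div_atTop tendsto_id).eventually (gt_mem_nhds (half_pos hε))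
  filter_upwards [eventually_gt_atTop T, hC] with t hTt hCt
  have ht : 0 < t := hT0.trans_lt hTt
  have hwL : IntervalIntegrable (fun s => w s - L) volume 0 t :=
    (hw t ht.le).sub intervalIntegrable_const
  have hsplit : t⁻¹ • (∫ s in 0..t, w s) - L
      = t⁻¹ • ((∫ s in 0..T, (w s - L)) + ∫ s in T..t, (w s - L)) := by
    rw [integral_add_adjacent_intervals (hwL.mono_set ?_) (hwL.mono_set ?_),
      intervalIntegral.integral_sub (hw t ht.le) intervalIntegrable_const,
      intervalIntegral.integral_const, smul_sub, sub_zero, smul_smul, inv_mul_cancel₀ ht.ne',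
      one_smul]
    exacts [uIcc_subset_uIcc left_mem_uIcc (mem_uIcc_of_le hT0 hTt.le),
      uIcc_subset_uIcc (mem_uIcc_of_le hT0 hTt.le) right_mem_uIcc]
  have htail : ‖∫ s in T..t, (w s - L)‖ ≤ ε / 2 * (t - T) := by
    refine (norm_integral_le_of_norm_le_const fun s hs => (hT s ?_).le).trans_eq ?_
    · exact (uIoc_of_le hTt.le ▸ hs).1.le
    · rw [abs_of_pos (sub_pos.2 hTt)]
  calc dist (cesaroMean w t) L
      ≤ t⁻¹ * (C + ε / 2 * (t - T)) := by
        rw [dist_eq_norm, cesaroMean, hsplit, norm_smul, Real.norm_of_nonneg (inv_nonneg.2 ht.le)]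
        gcongr
        exact (norm_add_le _ _).trans (by gcongr)
    _ = C / t + ε / 2 * (1 - T / t) := by field_simp
    _ < ε / 2 + ε / 2 := add_lt_add_of_lt_of_le hCt
        (mul_le_of_le_one_right (half_pos hε).le (by have := div_nonneg hT0 ht.le; linarith))
    _ = ε := add_halves ε

end CesaroMean

section Hilbert

variable {H : Type*} [NormedAddCommGroup H] [InnerProductSpace ℝ H]

def WeakTendsto {ι : Type*} (f : ι → H) (l : Filter ι) (p : H) : Prop :=
  ∀ z : H, Tendsto (fun i => ⟪f i, z⟫) l (𝓝 ⟪p, z⟫)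

theorem WeakTendsto.eq_of_tendsto_inner_sub {ι : Type*} {f : ι → H} {l₁ l₂ l : Filter ι}
    [l₁.NeBot] [l₂.NeBot] (h₁ : l₁ ≤ l) (h₂ : l₂ ≤ l) {p q : H} (hp : WeakTendsto f l₁ p)
    (hq : WeakTendsto f l₂ q) {L : ℝ} (hL : Tendsto (fun i => ⟪f i, p - q⟫) l (𝓝 L)) :
    p = q := by
  have hpL : ⟪p, p - q⟫ = L := tendsto_nhds_unique (hp _) (hL.mono_left h₁)
  have hqL : ⟪q, p - q⟫ = L := tendsto_nhds_unique (hq _) (hL.mono_left h₂)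
  rw [← sub_eq_zero, ← inner_self_eq_zero (𝕜 := ℝ), inner_sub_left, hpL, hqL, sub_self]

variable [CompleteSpace H]

theorem inner_cesaroMean {w : ℝ → H} {t : ℝ} (hw : IntervalIntegrable w volume 0 t) (z : H) :
    ⟪cesaroMean w t, z⟫ = cesaroMean (fun s => ⟪w s, z⟫) t := by
  rw [cesaroMean, cesaroMean, real_inner_smul_left, smul_eq_mul]
  simp_rw [real_inner_comm z]
  exact congrArg _ ((innerSL ℝ z).intervalIntegral_comp_comm hw).symm

theorem exists_weakTendsto_of_eventually_norm_le {ι : Type*} (V : Ultrafilter ι) {f : ι → H}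
    {M : ℝ} (hf : ∀ᶠ i in V, ‖f i‖ ≤ M) : ∃ p, WeakTendsto f V p := by
  set g : ι → WeakDual ℝ H := fun i => StrongDual.toWeakDual (InnerProductSpace.toDual ℝ H (f i))
  have hgK : ∀ᶠ i in V, g i ∈ WeakDual.toStrongDual ⁻¹' Metric.closedBall 0 M := by
    filter_upwards [hf] with i hi
    simpa [g] using hi
  obtain ⟨ℓ, -, hℓ⟩ := (WeakDual.isCompact_closedBall (0 : StrongDual ℝ H) M).ultrafilter_le_nhds'
    (V.map g) hgK
  refine ⟨(InnerProductSpace.toDual ℝ H).symm (WeakDual.toStrongDual ℓ), fun z => ?_⟩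
  rw [InnerProductSpace.toDual_symm_apply]
  exact tendsto_iff_forall_eval_tendsto_topDualPairing.1 hℓ z

/-- Opial's lemma, with the weak cluster points taken along ultrafilters. -/
theorem exists_weakTendsto_of_forall_tendsto_inner_sub {ι : Type*} {l : Filter ι} [l.NeBot]
    {f : ι → H} {S : Set H} {M : ℝ} (hbdd : ∀ᶠ i in l, ‖f i‖ ≤ M)
    (hS : ∀ V : Ultrafilter ι, ↑V ≤ l → ∀ p, WeakTendsto f V p → p ∈ S)
    (hconv : ∀ p ∈ S, ∀ q ∈ S, ∃ L, Tendsto (fun i => ⟪f i, p - q⟫) l (𝓝 L)) :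
    ∃ p ∈ S, WeakTendsto f l p := by
  have hlim : ∀ V : Ultrafilter ι, ↑V ≤ l → ∃ p ∈ S, WeakTendsto f V p := fun V hV =>
    have ⟨p, hp⟩ := exists_weakTendsto_of_eventually_norm_le V (hV hbdd)
    ⟨p, hS V hV p hp, hp⟩
  choose! P hPS hP using hlim
  have hU := Ultrafilter.of_le l
  refine ⟨P (Ultrafilter.of l), hPS _ hU, fun z => (tendsto_iff_ultrafilter _ _ _).2 fun V hV => ?_⟩
  obtain ⟨L, hL⟩ := hconv _ (hPS _ hU) _ (hPS V hV)
  rw [(hP _ hU).eq_of_tendsto_inner_sub hU hV (hP V hV) hL]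
  exact hP V hV z

end Hilbert

section Trajectory

variable {H : Type*} [NormedAddCommGroup H] [InnerProductSpace ℝ H] {A : Set (H × H)} {u : ℝ → H}

def IsTrajectory (A : Set (H × H)) (u : ℝ → H) : Prop :=
  LocallyLipschitzOn (Ici 0) u ∧
    ∀ᵐ t ∂(volume.restrict (Ioi (0:ℝ))), ∃ d : H, HasDerivAt u d t ∧ (u t, -d) ∈ A

namespace IsTrajectory

theorem intervalIntegrable (hu : IsTrajectory A u) {t : ℝ} (ht : 0 ≤ t) :
    IntervalIntegrable u volume 0 t :=
  (hu.1.continuousOn.mono Icc_subset_Ici_self).intervalIntegrable_of_Icc ht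

theorem half_norm_sub_sq_sub_le_integral (hu : IsTrajectory A u) (hA : MonotoneOp A)
    {y ys : H} (hy : (y, ys) ∈ A) {a b : ℝ} (ha : 0 ≤ a) (hab : a ≤ b) :
    ‖u b - y‖ ^ 2 / 2 - ‖u a - y‖ ^ 2 / 2 ≤ ∫ s in a..b, ⟪ys, y - u s⟫ := by
  have hsub : uIcc a b ⊆ Ici 0 := fun s hs => ha.trans (uIcc_of_le hab ▸ hs).1
  obtain ⟨K, hK⟩ := (hu.1.mono hsub).exists_lipschitzOnWith_of_compact isCompact_uIcc
  have hdist : AbsolutelyContinuousOnInterval (fun s => dist y (u s)) a b :=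
    ((LipschitzWith.dist_right y).comp_lipschitzOnWith hK).absolutelyContinuousOnInterval
  have henergy : AbsolutelyContinuousOnInterval (fun s => ‖u s - y‖ ^ 2 / 2) a b := by
    convert (hdist.fun_mul hdist).const_mul (1 / 2) using 2 with s
    rw [dist_comm, dist_eq_norm]
    ring
  have hφ : IntervalIntegrable (fun s => ⟪ys, y - u s⟫) volume a b :=
    (continuousOn_const.inner (continuousOn_const.sub (hu.1.continuousOn.mono hsub)))
      |>.intervalIntegrable
  refine henergy.sub_le_integral_of_ae_deriv_le hab hφ ?_
  filter_upwards [(ae_restrict_iff' measurableSet_Ioi).1 hu.2] with s hs hsab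
  obtain ⟨d, hd, hdA⟩ := hs (ha.trans_lt hsab.1)
  rw [((hd.sub_const y).norm_sq.div_const 2).deriv]
  have hmono := hA _ hdA _ hy
  simp only [inner_sub_left, inner_sub_right, inner_neg_left, real_inner_comm] at hmono ⊢
  linarith

theorem antitoneOn_norm_sub (hu : IsTrajectory A u) (hA : MonotoneOp A) {z : H}
    (hz : (z, 0) ∈ A) : AntitoneOn (fun t => ‖u t - z‖) (Ici 0) := by
  intro a ha b _ hab
  have h := hu.half_norm_sub_sq_sub_le_integral hA hz ha hab
  simp only [inner_zero_left, intervalIntegral.integral_zero] at h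
  exact (pow_le_pow_iff_left₀ (norm_nonneg _) (norm_nonneg _) two_ne_zero).1 (by linarith)

theorem exists_tendsto_norm_sub (hu : IsTrajectory A u) (hA : MonotoneOp A) {z : H}
    (hz : (z, 0) ∈ A) : ∃ L, Tendsto (fun t => ‖u t - z‖) atTop (𝓝 L) := by
  have hanti : Antitone fun t => ‖u (max t 0) - z‖ := fun s t hst =>
    hu.antitoneOn_norm_sub hA hz (le_max_right s 0) (le_max_right t 0) (max_le_max_right 0 hst)
  refine ⟨_, (tendsto_atTop_ciInf hanti ⟨0, ?_⟩).congr' ?_⟩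
  · rintro _ ⟨t, rfl⟩
    exact norm_nonneg _
  · filter_upwards [eventually_ge_atTop 0] with t ht
    rw [max_eq_left ht]

theorem exists_tendsto_inner_sub (hu : IsTrajectory A u) (hA : MonotoneOp A) {p q : H}
    (hp : (p, 0) ∈ A) (hq : (q, 0) ∈ A) : ∃ L, Tendsto (fun t => ⟪u t, p - q⟫) atTop (𝓝 L) := by
  obtain ⟨Lp, hLp⟩ := hu.exists_tendsto_norm_sub hA hp
  obtain ⟨Lq, hLq⟩ := hu.exists_tendsto_norm_sub hA hq
  refine ⟨_, ((((hLq.pow 2).sub (hLp.pow 2)).add_const (‖p‖ ^ 2)).sub_const (‖q‖ ^ 2)).div_const 2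
    |>.congr fun t => ?_⟩
  rw [norm_sub_sq_real, norm_sub_sq_real, inner_sub_right]
  ring

variable [CompleteSpace H]

theorem inner_sub_cesaroMean_le (hu : IsTrajectory A u) (hA : MonotoneOp A) {y ys : H}
    (hy : (y, ys) ∈ A) {t : ℝ} (ht : 0 < t) :
    ⟪ys, cesaroMean u t - y⟫ ≤ ‖u 0 - y‖ ^ 2 / (2 * t) := by
  have huint := hu.intervalIntegrable ht.le
  have hmean : ∫ s in 0..t, ⟪ys, y - u s⟫ = -(t * ⟪ys, cesaroMean u t - y⟫) := calc
    ∫ s in 0..t, ⟪ys, y - u s⟫ = ⟪ys, ∫ s in 0..t, (y - u s)⟫ :=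
      (innerSL ℝ ys).intervalIntegral_comp_comm (intervalIntegrable_const.sub huint)
    _ = ⟪ys, t • y - t • cesaroMean u t⟫ := by
      rw [intervalIntegral.integral_sub intervalIntegrable_const huint,
        intervalIntegral.integral_const, sub_zero, cesaroMean, smul_inv_smul₀ ht.ne']
    _ = -(t * ⟪ys, cesaroMean u t - y⟫) := by
      rw [← smul_sub, real_inner_smul_right, ← neg_sub, inner_neg_right, mul_neg]
  have henergy := hu.half_norm_sub_sq_sub_le_integral hA hy le_rfl ht.le
  rw [hmean] at henergy
  rw [le_div_iff₀ (by positivity)]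
  linarith [sq_nonneg ‖u t - y‖]

theorem mem_of_weakTendsto_cesaroMean (hu : IsTrajectory A u) (hA : MaximalMonotone A)
    {l : Filter ℝ} [l.NeBot] (hl : l ≤ atTop) {p : H} (hp : WeakTendsto (cesaroMean u) l p) :
    (p, 0) ∈ A := by
  refine hA.mem_of_forall_inner_nonneg fun q hq => ?_
  have hlhs : Tendsto (fun t => ⟪q.2, cesaroMean u t - q.1⟫) l (𝓝 ⟪q.2, p - q.1⟫) := by
    simpa only [inner_sub_right, real_inner_comm q.2] using (hp q.2).sub_const ⟪q.1, q.2⟫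
  have hrhs : Tendsto (fun t => ‖u 0 - q.1‖ ^ 2 / (2 * t)) l (𝓝 0) :=
    (tendsto_const_nhds.div_atTop (tendsto_id.const_mul_atTop two_pos)).mono_left hl
  have hle := le_of_tendsto_of_tendsto hlhs hrhs <| hl <| (eventually_gt_atTop 0).mono
    fun t ht => hu.inner_sub_cesaroMean_le hA.1 hq ht
  rw [sub_zero, ← neg_sub, inner_neg_right]
  linarith

theorem exists_tendsto_inner_cesaroMean_sub (hu : IsTrajectory A u) (hA : MonotoneOp A)
    {p q : H} (hp : (p, 0) ∈ A) (hq : (q, 0) ∈ A) :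
    ∃ L, Tendsto (fun t => ⟪cesaroMean u t, p - q⟫) atTop (𝓝 L) := by
  have hw (t : ℝ) (ht : 0 ≤ t) : IntervalIntegrable (fun s => ⟪u s, p - q⟫) volume 0 t :=
    ((hu.1.continuousOn.inner continuousOn_const).mono Icc_subset_Ici_self)
      |>.intervalIntegrable_of_Icc ht
  obtain ⟨L, hL⟩ := hu.exists_tendsto_inner_sub hA hp hq
  refine ⟨L, (tendsto_cesaroMean_of_tendsto hw hL).congr' ?_⟩
  filter_upwards [eventually_ge_atTop 0] with t ht
  rw [inner_cesaroMean (hu.intervalIntegrable ht)]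

end IsTrajectory

end Trajectory

theorem stmt16_general {H : Type*} [NormedAddCommGroup H] [InnerProductSpace ℝ H] [CompleteSpace H]
    (A : Set (H × H)) (hmax : MaximalMonotone A)
    (hS : {z : H | (z, 0) ∈ A}.Nonempty)
    (u : ℝ → H) (hulip : LocallyLipschitzOn (Ici 0) u)
    (hu : ∀ᵐ t ∂(volume.restrict (Ioi (0:ℝ))),
      ∃ d : H, HasDerivAt u d t ∧ (u t, -d) ∈ A) :
    ∃ p ∈ {z : H | (z, 0) ∈ A},
      ∀ y : H,
        Tendsto (fun t : ℝ => ⟪t⁻¹ • ∫ s in (0:ℝ)..t, u s, y⟫) atTop (𝓝 ⟪p, y⟫) := by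
  have htraj : IsTrajectory A u := ⟨hulip, hu⟩
  obtain ⟨z₀, hz₀⟩ := hS
  have hbdd : ∀ᶠ t in atTop, ‖cesaroMean u t‖ ≤ ‖u 0 - z₀‖ + ‖z₀‖ := by
    filter_upwards [eventually_gt_atTop 0] with t ht
    refine norm_cesaroMean_le ht fun s hs => (norm_le_norm_sub_add _ z₀).trans ?_
    gcongr
    exact htraj.antitoneOn_norm_sub hmax.1 hz₀ self_mem_Ici hs.1.le hs.1.le
  exact exists_weakTendsto_of_forall_tendsto_inner_sub hbdd
    (fun V hV p hp => htraj.mem_of_weakTendsto_cesaroMean hmax hV hp)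
    (fun p hp q hq => htraj.exists_tendsto_inner_cesaroMean_sub hmax.1 hp hq)

/-- Baillon–Brézis ergodic theorem: if the solution set
`S = {x | (x, 0) ∈ A}` of a maximal monotone operator is nonempty, then along any solution
`u` of `u̇ ∈ −Au` the averages `(1/t)∫₀ᵗ u(s) ds` converge weakly, as `t → ∞`, to a point
of `S`. -/
theorem stmt16 {H : Type*} [NormedAddCommGroup H] [InnerProductSpace ℝ H] [CompleteSpace H]
    (A : Set (H × H)) (hA : A.Nonempty) (hmax : MaximalMonotone A)
    (hS : {z : H | (z, 0) ∈ A}.Nonempty)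
    (u : ℝ → H) (hulip : LocallyLipschitzOn (Ici 0) u)
    (hu : ∀ᵐ t ∂(volume.restrict (Ioi (0:ℝ))),
      ∃ d : H, HasDerivAt u d t ∧ (u t, -d) ∈ A) :
    ∃ p ∈ {z : H | (z, 0) ∈ A},
      ∀ y : H,
        Tendsto (fun t : ℝ => ⟪t⁻¹ • ∫ s in (0:ℝ)..t, u s, y⟫) atTop (𝓝 ⟪p, y⟫) :=
  stmt16_general A hmax hS u hulip hu
end

section
/- (Bruck) Let A be a maximal monotone operator on a real Hilbert space H that is demipositive, and let u : [0, ∞) → H be a globally Lipschitz solution of the differential inclusion u̇ ∈ −Au. Then u(t) converges weakly, as t → ∞, to an element of the solution set S = {x : (x, 0) ∈ A}. -/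
/-!
Monotonicity of `A` makes `t ↦ ‖u t - p‖` nonincreasing for every zero `p` of `A`, so the
trajectory is bounded and all these distances converge. For the zero `w` given by
demipositivity, the excess of `‖u r - w‖ ^ 2` over its limit is eventually below any `δ ^ 2`,
and integrating `d/dt ‖u - w‖ ^ 2 = 2 ⟪u̇, u - w⟫` then yields a time `s ∈ (r, r + δ]` with
`0 ≤ ⟪-u̇ s, u s - w⟫ < δ`. Along times `r n → ∞` with `δ n → 0`, demipositivity shows that every
weak sequential cluster point of the trajectory is a zero. Opial's argument concludes: for two
such cluster points `p, q`, the function `⟪u t, p - q⟫` converges, which forces `p = q`.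
-/

open RealInnerProductSpace Filter Topology MeasureTheory Set

/-- An operator `A` is demipositive: there is `w` with `(w, 0) ∈ A` such that for every
sequence `(u_n)` in the graph's domain converging weakly to `u` with bounded companion
sequence `(v_n)`, `(u_n, v_n) ∈ A`, the convergence `⟪v_n, u_n − w⟫ → 0` forces
`(u, 0) ∈ A`. -/
def Demipositive {H : Type*} [NormedAddCommGroup H] [InnerProductSpace ℝ H]
    (A : Set (H × H)) : Prop :=
  ∃ w : H, (w, 0) ∈ A ∧
    ∀ (un vn : ℕ → H) (u : H),
      (∀ n, (un n, vn n) ∈ A) →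
      (∀ y : H, Tendsto (fun n => ⟪un n, y⟫) atTop (𝓝 ⟪u, y⟫)) →
      (∃ M : ℝ, ∀ n, ‖vn n‖ ≤ M) →
      Tendsto (fun n => ⟪vn n, un n - w⟫) atTop (𝓝 0) →
      (u, 0) ∈ A

open scoped NNReal

theorem AbsolutelyContinuousOnInterval.sub_le_of_ae_deriv_le {g : ℝ → ℝ} {a b m : ℝ}
    (hab : a ≤ b) (hg : AbsolutelyContinuousOnInterval g a b)
    (hd : ∀ᵐ t, t ∈ Ioc a b → deriv g t ≤ m) : g b - g a ≤ m * (b - a) := by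
  rw [← hg.integral_deriv_eq_sub]
  calc ∫ t in a..b, deriv g t ≤ ∫ _ in a..b, m := by
        rw [intervalIntegral.integral_of_le hab, intervalIntegral.integral_of_le hab]
        exact setIntegral_mono_ae_restrict hg.intervalIntegrable_deriv.1
          (integrableOn_const measure_Ioc_lt_top.ne) ((ae_restrict_iff' measurableSet_Ioc).2 hd)
    _ = m * (b - a) := by rw [intervalIntegral.integral_const, smul_eq_mul, mul_comm]

theorem norm_sub_sq_sub_le_of_ae_inner_le {E : Type*} [NormedAddCommGroup E]
    [InnerProductSpace ℝ E] {u : ℝ → E} {K : ℝ≥0} {a b m : ℝ} (p : E) (hab : a ≤ b)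
    (hu : LipschitzOnWith K u (Icc a b))
    (hd : ∀ᵐ t, t ∈ Ioc a b → ∃ d, HasDerivAt u d t ∧ ⟪d, u t - p⟫ ≤ m) :
    ‖u b - p‖ ^ 2 - ‖u a - p‖ ^ 2 ≤ 2 * m * (b - a) := by
  have hdist : AbsolutelyContinuousOnInterval (fun t => ‖u t - p‖) a b := by
    rw [← uIcc_of_le hab] at hu
    simpa only [Function.comp_def, dist_comm p, dist_eq_norm] using
      ((LipschitzWith.dist_right p).comp_lipschitzOnWith hu).absolutelyContinuousOnInterval
  have hsq : AbsolutelyContinuousOnInterval (fun t => ‖u t - p‖ ^ 2) a b := by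
    simpa only [sq] using hdist.fun_mul hdist
  refine hsq.sub_le_of_ae_deriv_le hab ?_
  filter_upwards [hd] with t ht hmem
  obtain ⟨d, hdt, hle⟩ := ht hmem
  rw [(hdt.sub_const p).norm_sq.deriv, real_inner_comm]
  linarith

theorem AntitoneOn.exists_tendsto_atTop {f : ℝ → ℝ} {a : ℝ} (hf : AntitoneOn f (Ici a))
    (hbdd : BddBelow (f '' Ici a)) :
    ∃ ℓ, Tendsto f atTop (𝓝 ℓ) ∧ ∀ t ∈ Ici a, ℓ ≤ f t := by
  set g := fun t => f (max t a)
  have hg : Antitone g := fun s t hst =>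
    hf (le_max_right s a) (le_max_right t a) (max_le_max hst le_rfl)
  have hgbdd : BddBelow (range g) :=
    hbdd.mono (range_subset_iff.2 fun t => mem_image_of_mem f (le_max_right t a))
  refine ⟨⨅ t, g t, (tendsto_atTop_ciInf hg hgbdd).congr' ?_, fun t ht => ?_⟩
  · filter_upwards [eventually_ge_atTop a] with t ht
    simp only [g, max_eq_left ht]
  · simpa only [g, max_eq_left (mem_Ici.1 ht)] using ciInf_le hgbdd t

theorem exists_subseq_weak_tendsto {H : Type*} [NormedAddCommGroup H] [InnerProductSpace ℝ H]
    [CompleteSpace H] {x : ℕ → H} {M : ℝ} (hx : ∀ᶠ n in atTop, ‖x n‖ ≤ M) :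
    ∃ φ : ℕ → ℕ, StrictMono φ ∧ ∃ p : H,
      ∀ y : H, Tendsto (fun n => ⟪x (φ n), y⟫) atTop (𝓝 ⟪p, y⟫) := by
  obtain ⟨N, hN⟩ := eventually_atTop.1 hx
  set Y := (Submodule.span ℝ (range x)).topologicalClosure
  have : TopologicalSpace.SeparableSpace Y :=
    ((countable_range x).isSeparable.span.closure.mono
      (Submodule.topologicalClosure_coe _).le).separableSpace
  have : CompleteSpace Y := (Submodule.isClosed_topologicalClosure _).completeSpace_coe
  have hxY (n : ℕ) : x n ∈ Y :=
    Submodule.le_topologicalClosure _ (Submodule.subset_span (mem_range_self n))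
  have inner_eq (v : Y) (y : H) :
      ⟪(v : H), y⟫ = InnerProductSpace.toDual ℝ Y v (Y.orthogonalProjectionOnto y) := by
    rw [InnerProductSpace.toDual_apply_apply,
      Submodule.inner_orthogonalProjectionOnto_eq_of_mem_left]
  let ξ (n : ℕ) : WeakDual ℝ Y :=
    StrongDual.toWeakDual (InnerProductSpace.toDual ℝ Y ⟨x (n + N), hxY _⟩)
  have hξ (n : ℕ) : ξ n ∈ WeakDual.toStrongDual ⁻¹' Metric.closedBall 0 M := by
    have : ‖InnerProductSpace.toDual ℝ Y ⟨x (n + N), hxY _⟩‖ ≤ M := by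
      simpa using hN _ (Nat.le_add_left N n)
    exact mem_closedBall_zero_iff.2 this
  obtain ⟨ψ, -, φ, hφ, hlim⟩ := WeakDual.isSeqCompact_closedBall ℝ Y 0 M hξ
  set q := (InnerProductSpace.toDual ℝ Y).symm (WeakDual.toStrongDual ψ)
  refine ⟨(· + N) ∘ φ, (strictMono_id.add_const N).comp hφ, q, fun y => ?_⟩
  have hψ : ψ = StrongDual.toWeakDual (InnerProductSpace.toDual ℝ Y q) := by simp [q]
  have := ((WeakDual.eval_continuous (Y.orthogonalProjectionOnto y)).tendsto ψ).comp hlim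
  rw [hψ] at this
  simp_rw [Function.comp_apply, inner_eq ⟨x _, hxY _⟩ y, inner_eq q]
  exact this

theorem real_inner_sub_eq_norm_sub_sq {H : Type*} [NormedAddCommGroup H] [InnerProductSpace ℝ H]
    (x p q : H) : ⟪x, p - q⟫ = (‖x - q‖ ^ 2 - ‖x - p‖ ^ 2 - ‖q‖ ^ 2 + ‖p‖ ^ 2) / 2 := by
  rw [norm_sub_sq_real, norm_sub_sq_real, inner_sub_right]
  ring

theorem eq_of_weak_tendsto_of_tendsto_norm_sub {H : Type*} [NormedAddCommGroup H]
    [InnerProductSpace ℝ H] {u : ℝ → H} {p q : H} {ℓp ℓq : ℝ} {r s : ℕ → ℝ}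
    (hp : Tendsto (fun t => ‖u t - p‖) atTop (𝓝 ℓp))
    (hq : Tendsto (fun t => ‖u t - q‖) atTop (𝓝 ℓq))
    (hr : Tendsto r atTop atTop) (hs : Tendsto s atTop atTop)
    (hrp : ∀ y, Tendsto (fun n => ⟪u (r n), y⟫) atTop (𝓝 ⟪p, y⟫))
    (hsq : ∀ y, Tendsto (fun n => ⟪u (s n), y⟫) atTop (𝓝 ⟪q, y⟫)) : p = q := by
  set c := (ℓq ^ 2 - ℓp ^ 2 - ‖q‖ ^ 2 + ‖p‖ ^ 2) / 2
  have hc : Tendsto (fun t => ⟪u t, p - q⟫) atTop (𝓝 c) := by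
    simp_rw [real_inner_sub_eq_norm_sub_sq _ p q]
    exact ((((hq.pow 2).sub (hp.pow 2)).sub_const _).add_const _).div_const 2
  have hpc : ⟪p, p - q⟫ = c := tendsto_nhds_unique (hrp _) (hc.comp hr)
  have hqc : ⟪q, p - q⟫ = c := tendsto_nhds_unique (hsq _) (hc.comp hs)
  rw [← sub_eq_zero, ← inner_self_eq_zero (𝕜 := ℝ), inner_sub_left, hpc, hqc, sub_self]

theorem exists_weak_tendsto_of_tendsto_norm_sub {H : Type*} [NormedAddCommGroup H]
    [InnerProductSpace ℝ H] [CompleteSpace H] {u : ℝ → H} {S : Set H} {M : ℝ}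
    (hbdd : ∀ᶠ t in atTop, ‖u t‖ ≤ M)
    (hconv : ∀ p ∈ S, ∃ ℓ, Tendsto (fun t => ‖u t - p‖) atTop (𝓝 ℓ))
    (hclust : ∀ (r : ℕ → ℝ) (q : H), Tendsto r atTop atTop →
      (∀ y, Tendsto (fun n => ⟪u (r n), y⟫) atTop (𝓝 ⟪q, y⟫)) → q ∈ S) :
    ∃ p ∈ S, ∀ y, Tendsto (fun t => ⟪u t, y⟫) atTop (𝓝 ⟪p, y⟫) := by
  have hsubseq {r : ℕ → ℝ} (hr : Tendsto r atTop atTop) : ∃ φ : ℕ → ℕ, ∃ q ∈ S,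
      Tendsto (r ∘ φ) atTop atTop ∧
        ∀ y, Tendsto (fun n => ⟪u (r (φ n)), y⟫) atTop (𝓝 ⟪q, y⟫) := by
    obtain ⟨φ, hφ, q, hq⟩ := exists_subseq_weak_tendsto (hr.eventually hbdd)
    have hrφ := hr.comp hφ.tendsto_atTop
    exact ⟨φ, q, hclust _ q hrφ hq, hrφ, hq⟩
  obtain ⟨φ, p, hpS, hrφ, hp⟩ := hsubseq tendsto_natCast_atTop_atTop
  obtain ⟨ℓp, hℓp⟩ := hconv p hpS
  refine ⟨p, hpS, fun y => tendsto_of_subseq_tendsto fun r hr => ?_⟩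
  obtain ⟨ψ, q, hqS, hrψ, hq⟩ := hsubseq hr
  obtain ⟨ℓq, hℓq⟩ := hconv q hqS
  obtain rfl := eq_of_weak_tendsto_of_tendsto_norm_sub hℓp hℓq hrφ hrψ hp hq
  exact ⟨ψ, hq y⟩

theorem MonotoneOp.inner_le_zero {H : Type*} [NormedAddCommGroup H] [InnerProductSpace ℝ H]
    {A : Set (H × H)} (hA : MonotoneOp A) {p x d : H} (hp : (p, 0) ∈ A) (hx : (x, -d) ∈ A) :
    ⟪d, x - p⟫ ≤ 0 := by
  have := hA _ hx _ hp
  simp only [sub_zero, inner_neg_left] at this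
  linarith

section Trajectory

variable {H : Type*} [NormedAddCommGroup H] [InnerProductSpace ℝ H] {A : Set (H × H)}
  {u : ℝ → H} {K : ℝ≥0}

theorem exists_mem_Ioc_inner_gt (hulip : LipschitzOnWith K u (Ici 0))
    (hu : ∀ᵐ t, 0 < t → ∃ d, HasDerivAt u d t ∧ (u t, -d) ∈ A) (p : H) {a b m : ℝ}
    (ha : 0 ≤ a) (hab : a ≤ b) (hlt : ‖u a - p‖ ^ 2 - ‖u b - p‖ ^ 2 < 2 * m * (b - a)) :
    ∃ t ∈ Ioc a b, ∃ d, HasDerivAt u d t ∧ (u t, -d) ∈ A ∧ -m < ⟪d, u t - p⟫ := by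
  by_contra! hle
  have := norm_sub_sq_sub_le_of_ae_inner_le (m := -m) p hab
    (hulip.mono (Icc_subset_Ici_iff hab |>.2 ha)) <| by
    filter_upwards [hu] with t ht hmem
    obtain ⟨d, hd, hdA⟩ := ht (ha.trans_lt hmem.1)
    exact ⟨d, hd, hle t hmem d hd hdA⟩
  linarith

variable (hA : MonotoneOp A) (hulip : LipschitzOnWith K u (Ici 0))
  (hu : ∀ᵐ t, 0 < t → ∃ d, HasDerivAt u d t ∧ (u t, -d) ∈ A)
include hA hulip hu

theorem antitoneOn_norm_sub {p : H} (hp : (p, 0) ∈ A) :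
    AntitoneOn (fun t => ‖u t - p‖) (Ici 0) := by
  intro a ha b _ hab
  have := norm_sub_sq_sub_le_of_ae_inner_le (m := 0) p hab
    (hulip.mono (Icc_subset_Ici_iff hab |>.2 ha)) <| by
      filter_upwards [hu] with t ht hmem
      obtain ⟨d, hd, hdA⟩ := ht (lt_of_le_of_lt ha hmem.1)
      exact ⟨d, hd, hA.inner_le_zero hp hdA⟩
  exact (pow_le_pow_iff_left₀ (norm_nonneg _) (norm_nonneg _) two_ne_zero).1 (by linarith)

theorem exists_tendsto_norm_sub {p : H} (hp : (p, 0) ∈ A) :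
    ∃ ℓ, Tendsto (fun t => ‖u t - p‖) atTop (𝓝 ℓ) ∧ ∀ t ∈ Ici 0, ℓ ≤ ‖u t - p‖ :=
  (antitoneOn_norm_sub hA hulip hu hp).exists_tendsto_atTop
    ⟨0, forall_mem_image.2 fun _ _ => norm_nonneg _⟩

theorem exists_seq_inner_gt {w : H} (hw : (w, 0) ∈ A) {r : ℕ → ℝ} (hr0 : ∀ n, 0 ≤ r n)
    (hr : Tendsto r atTop atTop) :
    ∃ (s : ℕ → ℝ) (d : ℕ → H) (δ : ℕ → ℝ), Tendsto δ atTop (𝓝 0) ∧ ∀ n,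
      s n ∈ Ioc (r n) (r n + δ n) ∧ HasDerivAt u (d n) (s n) ∧ (u (s n), -d n) ∈ A ∧
        -δ n < ⟪d n, u (s n) - w⟫ := by
  obtain ⟨ℓ, hℓ, hℓle⟩ := exists_tendsto_norm_sub hA hulip hu hw
  have hℓ0 : 0 ≤ ℓ := ge_of_tendsto' hℓ fun _ => norm_nonneg _
  set R := fun n => ‖u (r n) - w‖ ^ 2 - ℓ ^ 2
  have hR : Tendsto R atTop (𝓝 0) := by
    have := ((hℓ.comp hr).pow 2).sub_const (ℓ ^ 2)
    rwa [sub_self] at this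
  have hR0 (n : ℕ) : 0 ≤ R n :=
    sub_nonneg.2 (pow_le_pow_left₀ hℓ0 (hℓle _ (hr0 n)) 2)
  -- `δ n ^ 2` exceeds `R n`, so `‖u - w‖ ^ 2` cannot drop by `2 * δ n ^ 2` on
  -- `Ioc (r n) (r n + δ n)`.
  set δ := fun n : ℕ => √(R n + 1 / (n + 1))
  have hδ : Tendsto δ atTop (𝓝 0) := by
    have := hR.add tendsto_one_div_add_atTop_nhds_zero_nat
    rw [add_zero] at this
    have hsqrt := (Real.continuous_sqrt.tendsto 0).comp this
    rwa [Real.sqrt_zero] at hsqrt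
  have hpick (n : ℕ) : ∃ t ∈ Ioc (r n) (r n + δ n), ∃ d, HasDerivAt u d t ∧ (u t, -d) ∈ A ∧
      -δ n < ⟪d, u t - w⟫ := by
    have hn : (0 : ℝ) < 1 / (n + 1) := Nat.one_div_pos_of_nat
    have hpos : 0 < R n + 1 / (n + 1) := add_pos_of_nonneg_of_pos (hR0 n) hn
    have hδpos : 0 < δ n := Real.sqrt_pos.2 hpos
    have hδsq : δ n ^ 2 = R n + 1 / (n + 1) := Real.sq_sqrt hpos.le
    have hℓ_le : ℓ ^ 2 ≤ ‖u (r n + δ n) - w‖ ^ 2 :=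
      pow_le_pow_left₀ hℓ0 (hℓle _ (by simp only [mem_Ici]; linarith [hr0 n])) 2
    refine exists_mem_Ioc_inner_gt hulip hu w (hr0 n) (by linarith) ?_
    rw [add_sub_cancel_left]
    nlinarith
  choose s hs d hd hdA hlt using hpick
  exact ⟨s, d, δ, hδ, fun n => ⟨hs n, hd n, hdA n, hlt n⟩⟩

theorem mk_zero_mem_of_weak_tendsto (hdemi : Demipositive A) {r : ℕ → ℝ} {q : H}
    (hr : Tendsto r atTop atTop)
    (hq : ∀ y, Tendsto (fun n => ⟪u (r n), y⟫) atTop (𝓝 ⟪q, y⟫)) : (q, 0) ∈ A := by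
  obtain ⟨w, hw, hdemi⟩ := hdemi
  obtain ⟨N, hN⟩ := eventually_atTop.1 (hr.eventually_ge_atTop 0)
  obtain ⟨s, d, δ, hδ, hsd⟩ := exists_seq_inner_gt hA hulip hu hw (r := fun n => r (n + N))
    (fun n => hN _ (Nat.le_add_left N n)) (hr.comp (tendsto_add_atTop_nat N))
  have hs0 (n : ℕ) : 0 < s n := (hN _ (Nat.le_add_left N n)).trans_lt (hsd n).1.1
  have hsr (n : ℕ) : ‖u (s n) - u (r (n + N))‖ ≤ K * δ n := by
    have h := (hsd n).1
    calc ‖u (s n) - u (r (n + N))‖ ≤ K * dist (s n) (r (n + N)) := by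
          rw [← dist_eq_norm]
          exact hulip.dist_le_mul _ (hs0 n).le _ (hN _ (Nat.le_add_left N n))
      _ ≤ K * δ n := by
          rw [Real.dist_eq, abs_of_pos (by linarith [h.1])]
          gcongr
          linarith [h.2]
  refine hdemi (fun n => u (s n)) (fun n => -d n) q (fun n => (hsd n).2.2.1) (fun y => ?_)
    ⟨K, fun n => ?_⟩ ?_
  · have hclose : Tendsto (fun n => ⟪u (s n) - u (r (n + N)), y⟫) atTop (𝓝 0) := by
      refine squeeze_zero_norm (fun n => (norm_inner_le_norm _ _).trans
        (mul_le_mul_of_nonneg_right (hsr n) (norm_nonneg y))) ?_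
      simpa using (hδ.const_mul (K : ℝ)).mul_const ‖y‖
    simpa [inner_sub_left] using ((hq y).comp (tendsto_add_atTop_nat N)).add hclose
  · rw [norm_neg]
    exact (hsd n).2.1.le_of_lipschitzOn (Ici_mem_nhds (hs0 n)) hulip
  · refine squeeze_zero (fun n => ?_) (fun n => ?_) hδ
    · rw [inner_neg_left, neg_nonneg]
      exact hA.inner_le_zero hw (hsd n).2.2.1
    · rw [inner_neg_left]
      linarith [(hsd n).2.2.2]

end Trajectory

theorem stmt18_general {H : Type*} [NormedAddCommGroup H] [InnerProductSpace ℝ H] [CompleteSpace H]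
    (A : Set (H × H)) (hmax : MaximalMonotone A)
    (hdemi : Demipositive A)
    (u : ℝ → H) (K : NNReal) (hulip : LipschitzOnWith K u (Ici 0))
    (hu : ∀ᵐ t ∂(volume.restrict (Ioi (0:ℝ))),
      ∃ d : H, HasDerivAt u d t ∧ (u t, -d) ∈ A) :
    ∃ p : H, (p, 0) ∈ A ∧
      ∀ y : H, Tendsto (fun t : ℝ => ⟪u t, y⟫) atTop (𝓝 ⟪p, y⟫) := by
  have hA := hmax.1
  have hu' := (ae_restrict_iff' measurableSet_Ioi).1 hu
  have ⟨w, hw, _⟩ := hdemi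
  refine exists_weak_tendsto_of_tendsto_norm_sub (S := {p | (p, 0) ∈ A})
    (M := ‖w‖ + ‖u 0 - w‖) ?_
    (fun p hp => (exists_tendsto_norm_sub hA hulip hu' hp).imp fun _ h => h.1)
    (fun r q hr hq => mk_zero_mem_of_weak_tendsto hA hulip hu' hdemi hr hq)
  filter_upwards [eventually_ge_atTop 0] with t ht
  calc ‖u t‖ ≤ ‖w‖ + ‖u t - w‖ := norm_le_norm_add_norm_sub' _ w
    _ ≤ ‖w‖ + ‖u 0 - w‖ := by
      gcongr
      exact antitoneOn_norm_sub hA hulip hu' hw self_mem_Ici ht ht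

/-- Bruck: if `A` is maximal monotone and demipositive, every globally
Lipschitz solution `u` of `u̇ ∈ −Au` converges weakly, as `t → ∞`, to an element of the
solution set `S = {x | (x, 0) ∈ A}`. -/
theorem stmt18 {H : Type*} [NormedAddCommGroup H] [InnerProductSpace ℝ H] [CompleteSpace H]
    (A : Set (H × H)) (hA : A.Nonempty) (hmax : MaximalMonotone A)
    (hdemi : Demipositive A)
    (u : ℝ → H) (K : NNReal) (hulip : LipschitzOnWith K u (Ici 0))
    (hu : ∀ᵐ t ∂(volume.restrict (Ioi (0:ℝ))),
      ∃ d : H, HasDerivAt u d t ∧ (u t, -d) ∈ A) :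
    ∃ p : H, (p, 0) ∈ A ∧
      ∀ y : H, Tendsto (fun t : ℝ => ⟪u t, y⟫) atTop (𝓝 ⟪p, y⟫) :=
  stmt18_general A hmax hdemi u K hulip hu
end
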